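/- arXiv:1607.04358 — 8 statements merged into one kernel-verified Lean document; each statement's English description precedes it below -/
import Mathlib

section
/- Let X and Y be independent real-valued random variables with X ~ N(μX, σX²) and Y ~ N(μY, σY²), where σX, σY > 0. Set α = √(σX² + σY²) and β = (μX − μY)/α. Then E[(max(X, Y))²] = (μX² + σX²)·Φ(β) + (μY² + σY²)·Φ(−β) + (μX + μY)·α·φ(β), where φ(x) = exp(−x²/2)/√(2π) is the standard normal density and Φ is its cumulative distribution function. -/
open MeasureTheory ProbabilityTheory Real Set Filter
open scoped NNReal ENNReal

/-- The standard normal density `φ(x) = exp(−x²/2)/√(2π)`. -/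
noncomputable def stdNormalPDF (x : ℝ) : ℝ :=
  Real.exp (-x ^ 2 / 2) / Real.sqrt (2 * Real.pi)

/-- The standard normal cumulative distribution function `Φ(x) = ∫_{−∞}^{x} φ(t) dt`. -/
noncomputable def stdNormalCDF (x : ℝ) : ℝ :=
  ∫ t in Set.Iic x, stdNormalPDF t


namespace Clark

local notation "φ" => stdNormalPDF
local notation "Φ" => stdNormalCDF

lemma sp_pos (x : ℝ) : 0 < φ x :=
  div_pos (Real.exp_pos _) (Real.sqrt_pos.2 (by positivity))

lemma sp_nonneg (x : ℝ) : 0 ≤ φ x := (sp_pos x).le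

lemma sp_even (x : ℝ) : φ (-x) = φ x := by simp [stdNormalPDF]

lemma continuous_sp : Continuous φ := by
  unfold stdNormalPDF
  fun_prop

lemma sp_eq (x : ℝ) : φ x = Real.exp (-(1/2) * x ^ 2) * (Real.sqrt (2 * Real.pi))⁻¹ := by
  rw [stdNormalPDF, div_eq_mul_inv]; ring_nf

lemma integrable_sp : Integrable φ := by
  have := (integrable_exp_neg_mul_sq (by norm_num : (0:ℝ) < 1/2)).mul_const
    (Real.sqrt (2 * Real.pi))⁻¹
  exact this.congr (by filter_upwards with x; rw [sp_eq])

lemma integrable_mul_sp : Integrable (fun t => t * φ t) := by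
  have := (integrable_mul_exp_neg_mul_sq (by norm_num : (0:ℝ) < 1/2)).mul_const
    (Real.sqrt (2 * Real.pi))⁻¹
  exact this.congr (by filter_upwards with x; rw [sp_eq]; ring)

lemma integrable_sq_sp : Integrable (fun t => t ^ 2 * φ t) := by
  have h : Integrable (fun t : ℝ => t ^ 2 * Real.exp (-(1/2) * t ^ 2)) := by
    have hb : Integrable (fun t : ℝ => 4 * Real.exp (-(1/4) * t ^ 2)) :=
      (integrable_exp_neg_mul_sq (by norm_num : (0:ℝ) < 1/4)).const_mul 4
    refine hb.mono' (((measurable_id.pow_const 2).mul (by measurability)).aestronglyMeasurable) ?_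
    filter_upwards with t
    rw [Real.norm_eq_abs, abs_of_nonneg (by positivity)]
    have h1 : t ^ 2 / 4 ≤ Real.exp (t ^ 2 / 4) := (Real.add_one_le_exp _).trans' (by nlinarith)
    have h2 : Real.exp (-(1/2) * t ^ 2) = Real.exp (-(t^2/4)) * Real.exp (-(1/4) * t^2) := by
      rw [← Real.exp_add]; ring_nf
    rw [h2, Real.exp_neg]
    have h3 : t ^ 2 * (Real.exp (t ^ 2 / 4))⁻¹ ≤ 4 := by
      rw [mul_inv_le_iff₀ (Real.exp_pos _)]
      nlinarith [Real.exp_pos (t^2/4)]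
    nlinarith [Real.exp_pos (-(1/4) * t^2), Real.exp_pos ((t:ℝ)^2/4), sq_nonneg t,
      inv_pos.2 (Real.exp_pos (t^2/4))]
  exact (h.mul_const (Real.sqrt (2 * Real.pi))⁻¹).congr
    (by filter_upwards with x; rw [sp_eq]; ring)

lemma integral_sp : ∫ t, φ t = 1 := by
  have h := integral_gaussian (1/2)
  simp only [sp_eq]
  rw [MeasureTheory.integral_mul_const]
  rw [show (fun t : ℝ => Real.exp (-(1/2) * t ^ 2)) = fun t : ℝ => Real.exp (-(1/2 : ℝ) * t ^ 2) from rfl] at *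
  rw [h]
  rw [show π / (1/2) = 2 * π by ring]
  rw [mul_inv_cancel₀ (by positivity)]

lemma hasDerivAt_neg_sp (t : ℝ) : HasDerivAt (fun u => -φ u) (t * φ t) t := by
  have h1 : HasDerivAt (fun u : ℝ => -u ^ 2 / 2) (-t) t := by
    have := (hasDerivAt_pow 2 t).neg.div_const 2
    simpa using this.congr_deriv (by ring)
  have h2 := (h1.exp).div_const (Real.sqrt (2 * Real.pi))
  have h3 := h2.neg
  refine h3.congr_deriv ?_
  rw [stdNormalPDF]; ring

lemma tendsto_sp_atTop : Tendsto φ atTop (nhds 0) := by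
  rw [show (0:ℝ) = 0 / Real.sqrt (2 * Real.pi) by simp]
  apply Tendsto.div_const
  apply Real.tendsto_exp_atBot.comp
  have h : Tendsto (fun t : ℝ => t ^ 2 / 2) atTop atTop :=
    (tendsto_pow_atTop (by norm_num)).atTop_div_const (by norm_num)
  have := tendsto_neg_atBot_iff.mpr h
  simpa [neg_div] using this

lemma tendsto_mul_sp_atTop : Tendsto (fun t => t * φ t) atTop (nhds 0) := by
  have key : Tendsto (fun t : ℝ => t * Real.exp (-t ^ 2 / 2)) atTop (nhds 0) := by
    have h1 : Tendsto (fun t : ℝ => t * Real.exp (-t)) atTop (nhds 0) := by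
      simpa using Real.tendsto_pow_mul_exp_neg_atTop_nhds_zero 1
    refine tendsto_of_tendsto_of_tendsto_of_le_of_le' tendsto_const_nhds h1 ?_ ?_
    · filter_upwards [eventually_ge_atTop (0:ℝ)] with t ht
      positivity
    · filter_upwards [eventually_ge_atTop (2:ℝ)] with t ht
      have : Real.exp (-t ^ 2 / 2) ≤ Real.exp (-t) := by
        apply Real.exp_le_exp.2; nlinarith
      nlinarith
  have := key.div_const (Real.sqrt (2 * Real.pi))
  simpa [stdNormalPDF, mul_div_assoc] using this



lemma hasDerivAt_sp (t : ℝ) : HasDerivAt φ (-t * φ t) t := by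
  have := (hasDerivAt_neg_sp t).neg
  simpa [Pi.neg_def] using this.congr_deriv (by ring : -(t * φ t) = -t * φ t)

lemma hasDerivAt_neg_mul_sp (t : ℝ) :
    HasDerivAt (fun u => -(u * φ u)) (t ^ 2 * φ t - φ t) t := by
  have := ((hasDerivAt_id t).mul (hasDerivAt_sp t)).neg
  exact this.congr_deriv (by simp only [id_eq]; ring)

lemma int_Ioi_sp (c : ℝ) : ∫ t in Ioi c, φ t = Φ (-c) := by
  have h := integral_comp_neg_Ioi c φ
  simp_rw [sp_even] at h
  rw [h]; rfl

lemma int_Ioi_mul_sp (c : ℝ) : ∫ t in Ioi c, t * φ t = φ c := by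
  have h := integral_Ioi_of_hasDerivAt_of_tendsto' (f := fun u => -φ u)
    (f' := fun t => t * φ t) (a := c)
    (fun x _ => hasDerivAt_neg_sp x) integrable_mul_sp.integrableOn
    (by simpa using tendsto_sp_atTop.neg)
  rw [h]; ring

lemma int_Ioi_sq_sp (c : ℝ) : ∫ t in Ioi c, t ^ 2 * φ t = Φ (-c) + c * φ c := by
  have h := integral_Ioi_of_hasDerivAt_of_tendsto' (f := fun u => -(u * φ u))
    (f' := fun t => t ^ 2 * φ t - φ t) (a := c)
    (fun x _ => hasDerivAt_neg_mul_sp x) (integrable_sq_sp.sub integrable_sp).integrableOn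
    (by simpa using tendsto_mul_sp_atTop.neg)
  rw [integral_sub integrable_sq_sp.integrableOn integrable_sp.integrableOn, int_Ioi_sp] at h
  have h3 : (0:ℝ) - (fun u => -(u * φ u)) c = c * φ c := by simp
  rw [h3] at h
  linarith

lemma int_Iic_mul_sp (c : ℝ) : ∫ t in Iic c, t * φ t = -φ c := by
  have h := integral_comp_neg_Iic c (fun x => x * φ x)
  simp_rw [sp_even, int_Ioi_mul_sp (-c), sp_even] at h
  have : ∫ x in Iic c, -x * φ x = φ c := by simpa using h
  rw [← this, ← integral_neg]
  congr 1; ext x; ring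

lemma int_Iic_sq_sp (c : ℝ) : ∫ t in Iic c, t ^ 2 * φ t = Φ c - c * φ c := by
  have h := integral_comp_neg_Iic c (fun x => x ^ 2 * φ x)
  simp_rw [neg_sq, sp_even] at h
  rw [h, int_Ioi_sq_sp, neg_neg, sp_even]; ring

lemma integral_Iic_add_Ioi {f : ℝ → ℝ} (hf : Integrable f) (c : ℝ) :
    (∫ t in Iic c, f t) + ∫ t in Ioi c, f t = ∫ t, f t := by
  rw [← setIntegral_union (Iic_disjoint_Ioi le_rfl) measurableSet_Ioi
    hf.integrableOn hf.integrableOn, Iic_union_Ioi, setIntegral_univ]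

lemma int_Iic_sp (c : ℝ) : ∫ t in Iic c, φ t = Φ c := rfl

lemma Phi_add_Phi_neg (c : ℝ) : Φ c + Φ (-c) = 1 := by
  rw [← int_Iic_sp, ← int_Ioi_sp, integral_Iic_add_Ioi integrable_sp, integral_sp]

lemma int_mul_sp_total : ∫ t, t * φ t = 0 := by
  rw [← integral_Iic_add_Ioi integrable_mul_sp 0, int_Iic_mul_sp, int_Ioi_mul_sp]; ring

lemma int_sq_sp_total : ∫ t, t ^ 2 * φ t = 1 := by
  rw [← integral_Iic_add_Ioi integrable_sq_sp 0, int_Iic_sq_sp, int_Ioi_sq_sp]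
  have := Phi_add_Phi_neg 0
  simp only [neg_zero] at this ⊢
  linarith

lemma comp_scale (F : ℝ → ℝ) (m : ℝ) {s : ℝ} (hs : 0 < s) :
    ∫ x, F ((x - m) / s) = s * ∫ u, F u := by
  rw [integral_sub_right_eq_self (fun y => F (y / s)) m, Measure.integral_comp_div F s,
    abs_of_pos hs, smul_eq_mul]

lemma N0 (m : ℝ) {s : ℝ} (hs : 0 < s) : ∫ x, φ ((x - m) / s) / s = 1 := by
  rw [integral_div, comp_scale φ m hs, integral_sp]
  field_simp

lemma N1 (m : ℝ) {s : ℝ} (hs : 0 < s) : ∫ x, x * (φ ((x - m) / s) / s) = m := by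
  have key : ∀ x : ℝ, x * (φ ((x - m) / s) / s)
      = (fun u => (s * u + m) * φ u) ((x - m) / s) * s⁻¹ := by
    intro x
    have : s * ((x - m) / s) + m = x := by field_simp; ring
    simp only [this]
    ring
  simp_rw [key]
  rw [integral_mul_const, comp_scale (fun u => (s * u + m) * φ u) m hs]
  have : ∫ u, (s * u + m) * φ u = s * (∫ u, u * φ u) + m * ∫ u, φ u := by
    rw [← integral_const_mul, ← integral_const_mul,
      ← integral_add ((integrable_mul_sp.const_mul s)) (integrable_sp.const_mul m)]
    congr 1; ext u; ring
  rw [this, int_mul_sp_total, integral_sp]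
  field_simp; ring

lemma N2 (m : ℝ) {s : ℝ} (hs : 0 < s) :
    ∫ x, x ^ 2 * (φ ((x - m) / s) / s) = m ^ 2 + s ^ 2 := by
  have key : ∀ x : ℝ, x ^ 2 * (φ ((x - m) / s) / s)
      = (fun u => (s * u + m) ^ 2 * φ u) ((x - m) / s) * s⁻¹ := by
    intro x
    have : s * ((x - m) / s) + m = x := by field_simp; ring
    simp only [this]
    ring
  simp_rw [key]
  rw [integral_mul_const, comp_scale (fun u => (s * u + m) ^ 2 * φ u) m hs]
  have : ∫ u, (s * u + m) ^ 2 * φ u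
      = s ^ 2 * (∫ u, u ^ 2 * φ u) + (2 * s * m) * (∫ u, u * φ u) + m ^ 2 * ∫ u, φ u := by
    have e1 : (fun u : ℝ => (s * u + m) ^ 2 * φ u)
        = fun u : ℝ => s ^ 2 * (u ^ 2 * φ u) + (2 * s * m * (u * φ u) + m ^ 2 * φ u) := by
      ext u; ring
    have h23 : Integrable (fun u : ℝ => 2 * s * m * (u * φ u) + m ^ 2 * φ u) := by
      exact (integrable_mul_sp.const_mul _).add (integrable_sp.const_mul _)
    rw [e1, integral_add (integrable_sq_sp.const_mul _) h23,
      integral_add (integrable_mul_sp.const_mul _) (integrable_sp.const_mul _),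
      integral_const_mul, integral_const_mul, integral_const_mul]
    ring
  rw [this, int_mul_sp_total, int_sq_sp_total, integral_sp]
  field_simp
  ring

lemma density_factor (σ1 σ2 : ℝ) (h1 : 0 < σ1) (h2 : 0 < σ2) (μ1 μ2 x v : ℝ) :
    ((Real.sqrt (2 * π * σ1 ^ 2))⁻¹ * rexp (- (x - μ1) ^ 2 / (2 * σ1 ^ 2)))
      * ((Real.sqrt (2 * π * σ2 ^ 2))⁻¹ * rexp (- (x - v - μ2) ^ 2 / (2 * σ2 ^ 2)))
    = (φ ((v - (μ1 - μ2)) / Real.sqrt (σ1 ^ 2 + σ2 ^ 2)) / Real.sqrt (σ1 ^ 2 + σ2 ^ 2))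
      * (φ ((x - (σ2 ^ 2 * μ1 + σ1 ^ 2 * (v + μ2)) / (σ1 ^ 2 + σ2 ^ 2))
            / (σ1 * σ2 / Real.sqrt (σ1 ^ 2 + σ2 ^ 2)))
          / (σ1 * σ2 / Real.sqrt (σ1 ^ 2 + σ2 ^ 2))) := by
  have hA : (0:ℝ) < σ1 ^ 2 + σ2 ^ 2 := by positivity
  set α := Real.sqrt (σ1 ^ 2 + σ2 ^ 2) with hαdef
  have hα : 0 < α := Real.sqrt_pos.2 hA
  have hα2 : α ^ 2 = σ1 ^ 2 + σ2 ^ 2 := Real.sq_sqrt hA.le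
  have h2π : (0:ℝ) < 2 * π := by positivity
  have hs1 : Real.sqrt (2 * π * σ1 ^ 2) = Real.sqrt (2 * π) * σ1 := by
    rw [Real.sqrt_mul h2π.le, Real.sqrt_sq h1.le]
  have hs2 : Real.sqrt (2 * π * σ2 ^ 2) = Real.sqrt (2 * π) * σ2 := by
    rw [Real.sqrt_mul h2π.le, Real.sqrt_sq h2.le]
  have hsp : Real.sqrt (2 * π) * Real.sqrt (2 * π) = 2 * π :=
    Real.mul_self_sqrt h2π.le
  have hsppos : (0:ℝ) < Real.sqrt (2 * π) := Real.sqrt_pos.2 h2π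
  have hexp : - (x - μ1) ^ 2 / (2 * σ1 ^ 2) + - (x - v - μ2) ^ 2 / (2 * σ2 ^ 2)
      = -((v - (μ1 - μ2)) / α) ^ 2 / 2
        + -((x - (σ2 ^ 2 * μ1 + σ1 ^ 2 * (v + μ2)) / (σ1 ^ 2 + σ2 ^ 2))
            / (σ1 * σ2 / α)) ^ 2 / 2 := by
    rw [div_pow ((v - (μ1 - μ2))), div_pow, div_pow (σ1 * σ2), hα2]
    have hne : σ1 ^ 2 + σ2 ^ 2 ≠ 0 := hA.ne'
    field_simp
    ring
  have hconst : (Real.sqrt (2*π) * σ1)⁻¹ * (Real.sqrt (2*π) * σ2)⁻¹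
      = (Real.sqrt (2*π) * α)⁻¹ * (Real.sqrt (2*π) * (σ1 * σ2 / α))⁻¹ := by
    rw [← mul_inv, ← mul_inv]
    congr 1
    field_simp
  calc ((Real.sqrt (2 * π * σ1 ^ 2))⁻¹ * rexp (- (x - μ1) ^ 2 / (2 * σ1 ^ 2)))
      * ((Real.sqrt (2 * π * σ2 ^ 2))⁻¹ * rexp (- (x - v - μ2) ^ 2 / (2 * σ2 ^ 2)))
      = rexp (- (x - μ1) ^ 2 / (2 * σ1 ^ 2) + - (x - v - μ2) ^ 2 / (2 * σ2 ^ 2))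
        * ((Real.sqrt (2*π) * σ1)⁻¹ * (Real.sqrt (2*π) * σ2)⁻¹) := by
        rw [Real.exp_add, hs1, hs2]; ring
    _ = rexp (-((v - (μ1 - μ2)) / α) ^ 2 / 2
          + -((x - (σ2 ^ 2 * μ1 + σ1 ^ 2 * (v + μ2)) / (σ1 ^ 2 + σ2 ^ 2))
              / (σ1 * σ2 / α)) ^ 2 / 2)
        * ((Real.sqrt (2*π) * α)⁻¹ * (Real.sqrt (2*π) * (σ1 * σ2 / α))⁻¹) := by
        rw [hexp, hconst]
    _ = _ := by
        rw [Real.exp_add, stdNormalPDF, stdNormalPDF]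
        ring
lemma comp_scale_Iic (F : ℝ → ℝ) (c m : ℝ) {s : ℝ} (hs : 0 < s) :
    ∫ x in Iic c, F ((x - m) / s) = s * ∫ u in Iic ((c - m) / s), F u := by
  rw [← integral_indicator measurableSet_Iic, ← integral_indicator measurableSet_Iic]
  have key : ∀ x : ℝ, (Iic c).indicator (fun y => F ((y - m) / s)) x
      = (Iic ((c - m) / s)).indicator F ((x - m) / s) := by
    intro x
    by_cases h : x ≤ c
    · rw [indicator_of_mem (mem_Iic.2 h), indicator_of_mem]
      exact mem_Iic.2 (by gcongr)
    · rw [indicator_of_notMem (by simpa using h), indicator_of_notMem]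
      simp only [mem_Iic, not_le] at h ⊢
      gcongr
  simp_rw [key]
  exact comp_scale _ m hs

lemma comp_scale_Ioi (F : ℝ → ℝ) (c m : ℝ) {s : ℝ} (hs : 0 < s) :
    ∫ x in Ioi c, F ((x - m) / s) = s * ∫ u in Ioi ((c - m) / s), F u := by
  rw [← integral_indicator measurableSet_Ioi, ← integral_indicator measurableSet_Ioi]
  have key : ∀ x : ℝ, (Ioi c).indicator (fun y => F ((y - m) / s)) x
      = (Ioi ((c - m) / s)).indicator F ((x - m) / s) := by
    intro x
    by_cases h : c < x
    · rw [indicator_of_mem (mem_Ioi.2 h), indicator_of_mem]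
      exact mem_Ioi.2 (by gcongr)
    · rw [indicator_of_notMem (by simpa using h), indicator_of_notMem]
      simp only [mem_Ioi, not_lt] at h ⊢
      gcongr
  simp_rw [key]
  exact comp_scale _ m hs

lemma quad_Iic (a b c C : ℝ) :
    ∫ t in Iic C, (a + b * t + c * t ^ 2) * φ t
      = a * Φ C - b * φ C + c * (Φ C - C * φ C) := by
  have e1 : (fun t : ℝ => (a + b * t + c * t ^ 2) * φ t)
      = fun t : ℝ => a * φ t + (b * (t * φ t) + c * (t ^ 2 * φ t)) := by
    ext t; ring
  have h23 : Integrable (fun t : ℝ => b * (t * φ t) + c * (t ^ 2 * φ t)) := by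
    exact (integrable_mul_sp.const_mul _).add (integrable_sq_sp.const_mul _)
  rw [e1, integral_add (integrable_sp.const_mul _).integrableOn h23.integrableOn,
    integral_add (integrable_mul_sp.const_mul _).integrableOn
      (integrable_sq_sp.const_mul _).integrableOn,
    integral_const_mul, integral_const_mul, integral_const_mul,
    int_Iic_sp, int_Iic_mul_sp, int_Iic_sq_sp]
  ring

lemma quad_Ioi (a b c C : ℝ) :
    ∫ t in Ioi C, (a + b * t + c * t ^ 2) * φ t
      = a * Φ (-C) + b * φ C + c * (Φ (-C) + C * φ C) := by
  have e1 : (fun t : ℝ => (a + b * t + c * t ^ 2) * φ t)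
      = fun t : ℝ => a * φ t + (b * (t * φ t) + c * (t ^ 2 * φ t)) := by
    ext t; ring
  have h23 : Integrable (fun t : ℝ => b * (t * φ t) + c * (t ^ 2 * φ t)) := by
    exact (integrable_mul_sp.const_mul _).add (integrable_sq_sp.const_mul _)
  rw [e1, integral_add (integrable_sp.const_mul _).integrableOn h23.integrableOn,
    integral_add (integrable_mul_sp.const_mul _).integrableOn
      (integrable_sq_sp.const_mul _).integrableOn,
    integral_const_mul, integral_const_mul, integral_const_mul,
    int_Ioi_sp, int_Ioi_mul_sp, int_Ioi_sq_sp]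
  ring

lemma integrable_quad_sp (a b c : ℝ) : Integrable (fun u : ℝ => (a + b * u + c * u ^ 2) * φ u) := by
  have e1 : (fun u : ℝ => (a + b * u + c * u ^ 2) * φ u)
      = fun u : ℝ => a * φ u + (b * (u * φ u) + c * (u ^ 2 * φ u)) := by
    ext u; ring
  rw [e1]
  exact (integrable_sp.const_mul _).add
    ((integrable_mul_sp.const_mul _).add (integrable_sq_sp.const_mul _))

lemma integrable_scaled {F : ℝ → ℝ} (hF : Integrable F) (m : ℝ) {s : ℝ} (hs : 0 < s) :
    Integrable (fun x => F ((x - m) / s)) := by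
  have h1 : Integrable (fun x : ℝ => F (x / s)) := hF.comp_div hs.ne'
  have h2 := h1.comp_sub_right m
  simpa [sub_div] using h2

lemma integrable_N0 (m : ℝ) {s : ℝ} (hs : 0 < s) :
    Integrable (fun x => φ ((x - m) / s) / s) :=
  (integrable_scaled integrable_sp m hs).div_const s

lemma integrable_N2 (m : ℝ) {s : ℝ} (hs : 0 < s) :
    Integrable (fun x => x ^ 2 * (φ ((x - m) / s) / s)) := by
  have key : ∀ x : ℝ, x ^ 2 * (φ ((x - m) / s) / s)
      = (fun u => (m ^ 2 + 2 * s * m * u + s ^ 2 * u ^ 2) * φ u) ((x - m) / s) * s⁻¹ := by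
    intro x
    have h : s * ((x - m) / s) + m = x := by field_simp; ring
    have : (m ^ 2 + 2 * s * m * ((x - m) / s) + s ^ 2 * ((x - m) / s) ^ 2)
        = (s * ((x - m) / s) + m) ^ 2 := by ring
    simp only [this, h]
    ring
  have := (integrable_scaled (integrable_quad_sp (m ^ 2) (2 * s * m) (s ^ 2)) m hs).mul_const s⁻¹
  exact this.congr (by filter_upwards with x; rw [← key])

lemma N2' (w m : ℝ) {s : ℝ} (hs : 0 < s) :
    ∫ x, (x - w) ^ 2 * (φ ((x - m) / s) / s) = (m - w) ^ 2 + s ^ 2 := by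
  have h := integral_sub_right_eq_self
    (fun y => y ^ 2 * (φ ((y - (m - w)) / s) / s)) (μ := volume) w
  have e : ∀ x : ℝ, (x - w) ^ 2 * (φ ((x - w - (m - w)) / s) / s)
      = (x - w) ^ 2 * (φ ((x - m) / s) / s) := by
    intro x; congr 3; ring
  simp_rw [e] at h
  rw [h, N2 (m - w) hs]

lemma gpdf_raw {σ : ℝ} (hσ : 0 < σ) (μ x : ℝ) :
    gaussianPDFReal μ ((σ ^ 2).toNNReal) x
      = (Real.sqrt (2 * π * σ ^ 2))⁻¹ * rexp (- (x - μ) ^ 2 / (2 * σ ^ 2)) := by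
  rw [gaussianPDFReal]
  rw [Real.coe_toNNReal _ (sq_nonneg σ)]

lemma gpdf_eq {σ : ℝ} (hσ : 0 < σ) (μ x : ℝ) :
    gaussianPDFReal μ ((σ ^ 2).toNNReal) x = φ ((x - μ) / σ) / σ := by
  rw [gpdf_raw hσ, stdNormalPDF]
  have hs : Real.sqrt (2 * π * σ ^ 2) = Real.sqrt (2 * π) * σ := by
    rw [Real.sqrt_mul (by positivity), Real.sqrt_sq hσ.le]
  have hexp : -((x - μ) / σ) ^ 2 / 2 = - (x - μ) ^ 2 / (2 * σ ^ 2) := by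
    rw [div_pow]; field_simp
  rw [hs, hexp, mul_inv]
  ring

lemma integral_gaussianReal {v : ℝ≥0} (hv : v ≠ 0) (μ : ℝ) (g : ℝ → ℝ) :
    ∫ y, g y ∂(gaussianReal μ v) = ∫ y, g y * gaussianPDFReal μ v y := by
  rw [gaussianReal_of_var_ne_zero _ hv]
  have hpdf : gaussianPDF μ v = fun x => ((gaussianPDFReal μ v x).toNNReal : ℝ≥0∞) := rfl
  rw [hpdf]
  rw [integral_withDensity_eq_integral_smul
    (by exact (measurable_gaussianPDFReal μ v).real_toNNReal) g]
  congr 1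
  ext y
  rw [NNReal.smul_def, Real.coe_toNNReal _ (gaussianPDFReal_nonneg _ _ _), smul_eq_mul]
  ring

lemma integrable_sq_gaussianReal {σ : ℝ} (hσ : 0 < σ) (μ : ℝ) :
    Integrable (fun x => x ^ 2) (gaussianReal μ ((σ ^ 2).toNNReal)) := by
  have hv : ((σ ^ 2).toNNReal : ℝ≥0) ≠ 0 := by
    simp only [ne_eq, Real.toNNReal_eq_zero, not_le]
    positivity
  rw [gaussianReal_of_var_ne_zero _ hv]
  rw [integrable_withDensity_iff (measurable_gaussianPDF _ _)
    (ae_of_all _ fun x => ENNReal.ofReal_lt_top)]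
  have : ∀ x : ℝ, x ^ 2 * (gaussianPDF μ ((σ ^ 2).toNNReal) x).toReal
      = x ^ 2 * (φ ((x - μ) / σ) / σ) := by
    intro x
    rw [gaussianPDF, ENNReal.toReal_ofReal (gaussianPDFReal_nonneg _ _ _), gpdf_eq hσ]
  exact (integrable_N2 μ hσ).congr (by filter_upwards with x; rw [← this])

def shearEquiv : (ℝ × ℝ) ≃ᵐ (ℝ × ℝ) where
  toFun := fun z => (z.1, z.1 - z.2)
  invFun := fun z => (z.1, z.1 - z.2)
  left_inv := fun z => by simp
  right_inv := fun z => by simp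
  measurable_toFun := measurable_fst.prodMk (measurable_fst.sub measurable_snd)
  measurable_invFun := measurable_fst.prodMk (measurable_fst.sub measurable_snd)

lemma shearEquiv_coe : ⇑shearEquiv = fun z : ℝ × ℝ => (z.1, z.1 - z.2) := rfl

lemma shear_mp : MeasurePreserving (fun z : ℝ × ℝ => (z.1, z.1 - z.2))
    ((volume : Measure ℝ).prod volume) ((volume : Measure ℝ).prod volume) := by
  have h1 : MeasurePreserving (Prod.map (id : ℝ → ℝ) (Neg.neg : ℝ → ℝ))
      ((volume : Measure ℝ).prod volume) ((volume : Measure ℝ).prod volume) :=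
    (MeasurePreserving.id _).prod (Measure.measurePreserving_neg _)
  have h2 := measurePreserving_prod_add (volume : Measure ℝ) volume
  have h3 := h2.comp h1
  have heq : (fun z : ℝ × ℝ => (z.1, z.1 - z.2))
      = (fun z : ℝ × ℝ => (z.1, z.1 + z.2)) ∘ Prod.map id Neg.neg := by
    funext z
    simp [Prod.map, sub_eq_add_neg]
  rw [heq]
  exact h3

end Clark

open Clark


set_option maxHeartbeats 2000000 in
/-- Clark's formula for the second moment of the maximum of two independent Gaussian
random variables: `E[(max(X,Y))²] = (μX² + σX²) Φ(β) + (μY² + σY²) Φ(−β) + (μX + μY) α φ(β)`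
where `α = √(σX² + σY²)` and `β = (μX − μY)/α`. -/
theorem second_moment_max_of_gaussian
    {Ω : Type*} [MeasurableSpace Ω] (P : Measure Ω) [IsProbabilityMeasure P]
    (X Y : Ω → ℝ) (hX : Measurable X) (hY : Measurable Y)
    (μX μY σX σY : ℝ) (hσX : 0 < σX) (hσY : 0 < σY)
    (hXd : Measure.map X P = gaussianReal μX (σX ^ 2).toNNReal)
    (hYd : Measure.map Y P = gaussianReal μY (σY ^ 2).toNNReal)
    (hindep : IndepFun X Y P)
    (α β : ℝ) (hα : α = Real.sqrt (σX ^ 2 + σY ^ 2)) (hβ : β = (μX - μY) / α) :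
    ∫ ω, (max (X ω) (Y ω)) ^ 2 ∂P =
      (μX ^ 2 + σX ^ 2) * stdNormalCDF β + (μY ^ 2 + σY ^ 2) * stdNormalCDF (-β)
        + (μX + μY) * α * stdNormalPDF β := by
  have hA : (0:ℝ) < σX ^ 2 + σY ^ 2 := by positivity
  have hαpos : 0 < α := hα ▸ Real.sqrt_pos.2 hA
  have hα2 : α ^ 2 = σX ^ 2 + σY ^ 2 := by rw [hα]; exact Real.sq_sqrt hA.le
  have hvX : ((σX ^ 2).toNNReal : ℝ≥0) ≠ 0 := by
    simp only [ne_eq, Real.toNNReal_eq_zero, not_le]; positivity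
  have hvY : ((σY ^ 2).toNNReal : ℝ≥0) ≠ 0 := by
    simp only [ne_eq, Real.toNNReal_eq_zero, not_le]; positivity
  set s : ℝ := σX * σY / α with hs_def
  have hspos : 0 < s := by positivity
  set gX : ℝ → ℝ := gaussianPDFReal μX ((σX ^ 2).toNNReal) with hgX_def
  set gY : ℝ → ℝ := gaussianPDFReal μY ((σY ^ 2).toNNReal) with hgY_def
  have hgXe : gX = fun x => stdNormalPDF ((x - μX) / σX) / σX := funext (gpdf_eq hσX μX)
  have hgYe : gY = fun x => stdNormalPDF ((x - μY) / σY) / σY := funext (gpdf_eq hσY μY)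
  have hgXnn : ∀ x, 0 ≤ gX x := fun x => gaussianPDFReal_nonneg _ _ x
  have hgYnn : ∀ x, 0 ≤ gY x := fun x => gaussianPDFReal_nonneg _ _ x
  set mD : ℝ := μX - μY with hmD_def
  set mv : ℝ → ℝ := fun v => (σY ^ 2 * μX + σX ^ 2 * (v + μY)) / (σX ^ 2 + σY ^ 2) with hmv_def
  set D : ℝ → ℝ := fun v => stdNormalPDF ((v - mD) / α) / α with hD_def
  set C : ℝ → ℝ → ℝ := fun v x => stdNormalPDF ((x - mv v) / s) / s with hC_def
  have hfact : ∀ v x, gX x * gY (x - v) = D v * C v x := by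
    intro v x
    rw [hgX_def, hgY_def, gpdf_raw hσX, gpdf_raw hσY]
    have h := density_factor σX σY hσX hσY μX μY x v
    rw [h, hD_def, hC_def, hmv_def, hmD_def, hs_def, hα]
  have hmv_lin : ∀ v, mv v = μX + (σX ^ 2 / α) * ((v - mD) / α) := by
    intro v
    rw [hmv_def, hmD_def, show σY ^ 2 = α ^ 2 - σX ^ 2 from by rw [hα2]; ring]
    field_simp
    ring
  have hmv_lin' : ∀ v, mv v - v = μY - (σY ^ 2 / α) * ((v - mD) / α) := by
    intro v
    rw [hmv_def, hmD_def, show σY ^ 2 = α ^ 2 - σX ^ 2 from by rw [hα2]; ring]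
    field_simp
    ring
  -- step 1 : map to the product of Gaussians
  have hmap : P.map (fun ω => (X ω, Y ω))
      = (gaussianReal μX ((σX ^ 2).toNNReal)).prod (gaussianReal μY ((σY ^ 2).toNNReal)) := by
    rw [← hXd, ← hYd]
    exact (indepFun_iff_map_prod_eq_prod_map_map hX.aemeasurable hY.aemeasurable).mp hindep
  have hmeas_max : Measurable (fun z : ℝ × ℝ => max z.1 z.2 ^ 2) :=
    (measurable_fst.max measurable_snd).pow_const 2
  have step1 : ∫ ω, (max (X ω) (Y ω)) ^ 2 ∂P
      = ∫ z : ℝ × ℝ, max z.1 z.2 ^ 2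
          ∂((gaussianReal μX ((σX ^ 2).toNNReal)).prod (gaussianReal μY ((σY ^ 2).toNNReal))) := by
    rw [← hmap, integral_map (hX.prodMk hY).aemeasurable hmeas_max.aestronglyMeasurable]
  -- integrability over the product
  have hsqX : Integrable (fun x : ℝ => x ^ 2) (gaussianReal μX ((σX ^ 2).toNNReal)) :=
    integrable_sq_gaussianReal hσX μX
  have hsqY : Integrable (fun x : ℝ => x ^ 2) (gaussianReal μY ((σY ^ 2).toNNReal)) :=
    integrable_sq_gaussianReal hσY μY
  have hIntmax : Integrable (fun z : ℝ × ℝ => max z.1 z.2 ^ 2)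
      ((gaussianReal μX ((σX ^ 2).toNNReal)).prod (gaussianReal μY ((σY ^ 2).toNNReal))) := by
    have hmapfst : Measure.map Prod.fst
        ((gaussianReal μX ((σX ^ 2).toNNReal)).prod (gaussianReal μY ((σY ^ 2).toNNReal)))
        = gaussianReal μX ((σX ^ 2).toNNReal) := by
      rw [Measure.map_fst_prod]; simp
    have hmapsnd : Measure.map Prod.snd
        ((gaussianReal μX ((σX ^ 2).toNNReal)).prod (gaussianReal μY ((σY ^ 2).toNNReal)))
        = gaussianReal μY ((σY ^ 2).toNNReal) := by
      rw [Measure.map_snd_prod]; simp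
    have h1 : Integrable (fun z : ℝ × ℝ => z.1 ^ 2)
        ((gaussianReal μX ((σX ^ 2).toNNReal)).prod (gaussianReal μY ((σY ^ 2).toNNReal))) := by
      rw [← hmapfst] at hsqX
      exact (integrable_map_measure
        ((measurable_id.pow_const 2).aestronglyMeasurable) measurable_fst.aemeasurable).mp hsqX
    have h2 : Integrable (fun z : ℝ × ℝ => z.2 ^ 2)
        ((gaussianReal μX ((σX ^ 2).toNNReal)).prod (gaussianReal μY ((σY ^ 2).toNNReal))) := by
      rw [← hmapsnd] at hsqY
      exact (integrable_map_measure
        ((measurable_id.pow_const 2).aestronglyMeasurable) measurable_snd.aemeasurable).mp hsqY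
    refine (h1.add h2).mono' hmeas_max.aestronglyMeasurable ?_
    filter_upwards with z
    simp only [Pi.add_apply]
    rw [Real.norm_eq_abs, abs_of_nonneg (sq_nonneg _)]
    rcases le_total z.1 z.2 with h | h
    · rw [max_eq_right h]; nlinarith [sq_nonneg z.1]
    · rw [max_eq_left h]; nlinarith [sq_nonneg z.2]
  -- step 2 : iterated integral, inner conversion to Lebesgue with density and shift
  have step2 : ∀ x : ℝ, (∫ y, max x y ^ 2 ∂(gaussianReal μY ((σY ^ 2).toNNReal)))
      = ∫ v, max x (x - v) ^ 2 * gY (x - v) := by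
    intro x
    rw [integral_gaussianReal hvY]
    exact (integral_sub_left_eq_self (fun y => max x y ^ 2 * gY y) volume x).symm
  have step3 : ∫ ω, (max (X ω) (Y ω)) ^ 2 ∂P
      = ∫ x, (∫ v, max x (x - v) ^ 2 * gY (x - v)) * gX x := by
    rw [step1, integral_prod _ hIntmax]
    simp_rw [step2]
    rw [integral_gaussianReal hvX]
  have step4 : ∫ ω, (max (X ω) (Y ω)) ^ 2 ∂P
      = ∫ x, ∫ v, max x (x - v) ^ 2 * gY (x - v) * gX x := by
    rw [step3]
    congr 1
    funext x
    rw [← integral_mul_const]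
  -- integrability of the 2d integrand wrt Lebesgue
  have hmeasgX : Measurable gX := hgX_def ▸ measurable_gaussianPDFReal _ _
  have hmeasgY : Measurable gY := hgY_def ▸ measurable_gaussianPDFReal _ _
  have hF : Integrable (fun z : ℝ × ℝ => max z.1 z.2 ^ 2 * gY z.2 * gX z.1)
      ((volume : Measure ℝ).prod volume) := by
    have c1 : Integrable (fun x : ℝ => x ^ 2 * gX x) := by
      rw [hgXe]; exact integrable_N2 μX hσX
    have c2 : Integrable gY := by rw [hgYe]; exact integrable_N0 μY hσY
    have c3 : Integrable gX := by rw [hgXe]; exact integrable_N0 μX hσX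
    have c4 : Integrable (fun y : ℝ => y ^ 2 * gY y) := by
      rw [hgYe]; exact integrable_N2 μY hσY
    have hb : Integrable
        (fun z : ℝ × ℝ => (z.1 ^ 2 * gX z.1) * gY z.2 + gX z.1 * (z.2 ^ 2 * gY z.2))
        ((volume : Measure ℝ).prod volume) := by
      exact (c1.mul_prod c2).add (c3.mul_prod c4)
    refine hb.mono' ((hmeas_max.mul (hmeasgY.comp measurable_snd)).mul
      (hmeasgX.comp measurable_fst)).aestronglyMeasurable ?_
    filter_upwards with z
    have hmax : max z.1 z.2 ^ 2 ≤ z.1 ^ 2 + z.2 ^ 2 := by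
      rcases le_total z.1 z.2 with h | h
      · rw [max_eq_right h]; nlinarith [sq_nonneg z.1]
      · rw [max_eq_left h]; nlinarith [sq_nonneg z.2]
    rw [Real.norm_eq_abs, abs_of_nonneg
      (mul_nonneg (mul_nonneg (sq_nonneg _) (hgYnn _)) (hgXnn _))]
    calc max z.1 z.2 ^ 2 * gY z.2 * gX z.1
        ≤ (z.1 ^ 2 + z.2 ^ 2) * gY z.2 * gX z.1 := by
          exact mul_le_mul_of_nonneg_right
            (mul_le_mul_of_nonneg_right hmax (hgYnn _)) (hgXnn _)
      _ = (z.1 ^ 2 * gX z.1) * gY z.2 + gX z.1 * (z.2 ^ 2 * gY z.2) := by ring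
  have hH : Integrable
      (Function.uncurry fun x v => max x (x - v) ^ 2 * gY (x - v) * gX x)
      ((volume : Measure ℝ).prod volume) := by
    have hcomp : (Function.uncurry fun x v => max x (x - v) ^ 2 * gY (x - v) * gX x)
        = (fun z : ℝ × ℝ => max z.1 z.2 ^ 2 * gY z.2 * gX z.1)
          ∘ (fun z : ℝ × ℝ => (z.1, z.1 - z.2)) := rfl
    rw [hcomp, ← shearEquiv_coe]
    rw [← (shearEquiv_coe ▸ shear_mp.map_eq :
      Measure.map (⇑shearEquiv) ((volume : Measure ℝ).prod volume)
        = (volume : Measure ℝ).prod volume)] at hF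
    exact (shearEquiv.measurableEmbedding.integrable_map_iff).mp hF
  have step5 : ∫ ω, (max (X ω) (Y ω)) ^ 2 ∂P
      = ∫ v, ∫ x, max x (x - v) ^ 2 * gY (x - v) * gX x := by
    rw [step4]
    exact integral_integral_swap hH
  have hG : Integrable (fun v => ∫ x, max x (x - v) ^ 2 * gY (x - v) * gX x) volume := by
    have := hH.swap.integral_prod_left
    exact this
  -- the two half-line pieces
  set Fq1 : ℝ → ℝ := fun t => ((μX + σX ^ 2 / α * t) ^ 2 + s ^ 2) * stdNormalPDF t with hFq1_def
  set Fq2 : ℝ → ℝ := fun t => ((μY - σY ^ 2 / α * t) ^ 2 + s ^ 2) * stdNormalPDF t with hFq2_def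
  have hIoi : ∫ v in Ioi (0:ℝ), ∫ x, max x (x - v) ^ 2 * gY (x - v) * gX x
      = ∫ t in Ioi (-β), Fq1 t := by
    have hpt : EqOn (fun v => ∫ x, max x (x - v) ^ 2 * gY (x - v) * gX x)
        (fun v => Fq1 ((v - mD) / α) * α⁻¹) (Ioi (0:ℝ)) := by
      intro v hv
      have hvpos : (0:ℝ) < v := hv
      have hinner : (fun x => max x (x - v) ^ 2 * gY (x - v) * gX x)
          = fun x => D v * (x ^ 2 * C v x) := by
        funext x
        rw [max_eq_left (by linarith : x - v ≤ x)]
        linear_combination x ^ 2 * hfact v x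
      show (∫ x, max x (x - v) ^ 2 * gY (x - v) * gX x) = _
      rw [hinner, integral_const_mul, hC_def]
      rw [N2 (mv v) hspos, hmv_lin v, hD_def]
      simp only [hFq1_def]
      ring
    rw [setIntegral_congr_fun measurableSet_Ioi hpt, integral_mul_const,
      comp_scale_Ioi Fq1 0 mD hαpos]
    have h0 : (0 - mD) / α = -β := by rw [hβ, hmD_def]; ring
    rw [h0]
    field_simp
  have hIic : ∫ v in Iic (0:ℝ), ∫ x, max x (x - v) ^ 2 * gY (x - v) * gX x
      = ∫ t in Iic (-β), Fq2 t := by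
    have hpt : EqOn (fun v => ∫ x, max x (x - v) ^ 2 * gY (x - v) * gX x)
        (fun v => Fq2 ((v - mD) / α) * α⁻¹) (Iic (0:ℝ)) := by
      intro v hv
      have hvle : v ≤ (0:ℝ) := hv
      have hinner : (fun x => max x (x - v) ^ 2 * gY (x - v) * gX x)
          = fun x => D v * ((x - v) ^ 2 * C v x) := by
        funext x
        rw [max_eq_right (by linarith : x ≤ x - v)]
        linear_combination (x - v) ^ 2 * hfact v x
      show (∫ x, max x (x - v) ^ 2 * gY (x - v) * gX x) = _
      rw [hinner, integral_const_mul, hC_def]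
      rw [N2' v (mv v) hspos]
      have : mv v - v = μY - σY ^ 2 / α * ((v - mD) / α) := hmv_lin' v
      rw [this, hD_def]
      simp only [hFq2_def]
      ring
    rw [setIntegral_congr_fun measurableSet_Iic hpt, integral_mul_const,
      comp_scale_Iic Fq2 0 mD hαpos]
    have h0 : (0 - mD) / α = -β := by rw [hβ, hmD_def]; ring
    rw [h0]
    field_simp
  -- evaluate the half-line integrals
  have hquadIoi : ∫ t in Ioi (-β), Fq1 t
      = (μX ^ 2 + s ^ 2) * stdNormalCDF β + (2 * μX * (σX ^ 2 / α)) * stdNormalPDF β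
        + (σX ^ 2 / α) ^ 2 * (stdNormalCDF β - β * stdNormalPDF β) := by
    have he : Fq1
        = fun t => ((μX ^ 2 + s ^ 2) + (2 * μX * (σX ^ 2 / α)) * t
            + (σX ^ 2 / α) ^ 2 * t ^ 2) * stdNormalPDF t := by
      rw [hFq1_def]; funext t; ring
    rw [he, quad_Ioi, neg_neg, sp_even]
    ring
  have hquadIic : ∫ t in Iic (-β), Fq2 t
      = (μY ^ 2 + s ^ 2) * stdNormalCDF (-β) + (2 * μY * (σY ^ 2 / α)) * stdNormalPDF β
        + (σY ^ 2 / α) ^ 2 * (stdNormalCDF (-β) + β * stdNormalPDF β) := by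
    have he : Fq2
        = fun t => ((μY ^ 2 + s ^ 2) + (-(2 * μY * (σY ^ 2 / α))) * t
            + (σY ^ 2 / α) ^ 2 * t ^ 2) * stdNormalPDF t := by
      rw [hFq2_def]; funext t; ring
    rw [he, quad_Iic, sp_even]
    ring
  -- final assembly
  rw [step5, ← integral_Iic_add_Ioi hG 0, hIoi, hIic, hquadIoi, hquadIic]
  have hs2 : s ^ 2 = σX ^ 2 * σY ^ 2 / (σX ^ 2 + σY ^ 2) := by
    rw [hs_def, div_pow, hα2]
    ring
  have hσY2 : σY ^ 2 = α ^ 2 - σX ^ 2 := by rw [hα2]; ring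
  generalize stdNormalCDF β = p, stdNormalCDF (-β) = q, stdNormalPDF β = r
  rw [hβ, hs2, hσY2]
  field_simp
  ring
end

section
/- Let X₁, …, Xₙ (n ≥ 2) be independent real-valued Gaussian random variables with Xᵢ ~ N(μᵢ, σᵢ²), σᵢ > 0. Then the probability of the full ordering is bounded above by the product of the pairwise ordering probabilities of successive pairs: P(X₁ < X₂ ∧ X₂ < X₃ ∧ … ∧ X_{n−1} < Xₙ) ≤ ∏_{i=2}^{n} P(X_{i−1} < X_i). -/
open MeasureTheory ProbabilityTheory Set ENNReal

namespace ProbOrderAux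

/-! ### A Chebyshev / FKG-type association inequality -/

/-- Rearrangement inequality for four elements of `ℝ≥0∞`. -/
lemma rearrange {a b c d : ℝ≥0∞} (hab : a ≤ b) (hcd : c ≤ d) :
    a * d + b * c ≤ a * c + b * d := by
  obtain ⟨e, rfl⟩ := exists_add_of_le hab
  obtain ⟨f, rfl⟩ := exists_add_of_le hcd
  have h : a * c + (a + e) * (c + f) = (a * (c + f) + (a + e) * c) + e * f := by ring
  rw [h]
  exact le_self_add

/-- Chebyshev's integral (association) inequality for a probability measure on `ℝ`:
a monotone and an antitone function are negatively correlated. -/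
lemma chebyshev (μ : Measure ℝ) [IsProbabilityMeasure μ] {g f : ℝ → ℝ≥0∞}
    (hg : Monotone g) (hf : Antitone f) :
    ∫⁻ x, g x * f x ∂μ ≤ (∫⁻ x, g x ∂μ) * ∫⁻ x, f x ∂μ := by
  have hgm : Measurable g := hg.measurable
  have hfm : Measurable f := hf.measurable
  have key : ∀ p : ℝ × ℝ, g p.1 * f p.1 + g p.2 * f p.2 ≤ g p.1 * f p.2 + g p.2 * f p.1 := by
    intro p
    rcases le_total p.1 p.2 with h | h
    · exact rearrange (hg h) (hf h)
    · have := rearrange (hg h) (hf h)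
      calc g p.1 * f p.1 + g p.2 * f p.2 = g p.2 * f p.2 + g p.1 * f p.1 := by ring
        _ ≤ g p.2 * f p.1 + g p.1 * f p.2 := this
        _ = g p.1 * f p.2 + g p.2 * f p.1 := by ring
  have h1 : ∫⁻ p : ℝ × ℝ, g p.1 * f p.1 ∂(μ.prod μ) = ∫⁻ x, g x * f x ∂μ := by
    have := lintegral_prod_mul (μ := μ) (ν := μ)
      (f := fun x => g x * f x) (g := fun _ => (1 : ℝ≥0∞))
      ((hgm.mul hfm).aemeasurable) aemeasurable_const
    simpa using this
  have h2 : ∫⁻ p : ℝ × ℝ, g p.2 * f p.2 ∂(μ.prod μ) = ∫⁻ x, g x * f x ∂μ := by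
    have := lintegral_prod_mul (μ := μ) (ν := μ)
      (f := fun _ => (1 : ℝ≥0∞)) (g := fun x => g x * f x)
      aemeasurable_const ((hgm.mul hfm).aemeasurable)
    simpa using this
  have h3 : ∫⁻ p : ℝ × ℝ, g p.1 * f p.2 ∂(μ.prod μ) = (∫⁻ x, g x ∂μ) * ∫⁻ x, f x ∂μ :=
    lintegral_prod_mul hgm.aemeasurable hfm.aemeasurable
  have h4 : ∫⁻ p : ℝ × ℝ, g p.2 * f p.1 ∂(μ.prod μ) = (∫⁻ x, g x ∂μ) * ∫⁻ x, f x ∂μ := by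
    have := lintegral_prod_mul (μ := μ) (ν := μ) hfm.aemeasurable hgm.aemeasurable
    calc ∫⁻ p : ℝ × ℝ, g p.2 * f p.1 ∂(μ.prod μ) = ∫⁻ p : ℝ × ℝ, f p.1 * g p.2 ∂(μ.prod μ) := by
          simp [mul_comm]
      _ = (∫⁻ x, f x ∂μ) * ∫⁻ x, g x ∂μ := this
      _ = (∫⁻ x, g x ∂μ) * ∫⁻ x, f x ∂μ := mul_comm _ _
  have hmain : (2 : ℝ≥0∞) * ∫⁻ x, g x * f x ∂μ ≤
      2 * ((∫⁻ x, g x ∂μ) * ∫⁻ x, f x ∂μ) := by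
    have lhs : (2 : ℝ≥0∞) * ∫⁻ x, g x * f x ∂μ
        = ∫⁻ p : ℝ × ℝ, (g p.1 * f p.1 + g p.2 * f p.2) ∂(μ.prod μ) := by
      rw [lintegral_add_left (by fun_prop), h1, h2]; ring
    have rhs : (2 : ℝ≥0∞) * ((∫⁻ x, g x ∂μ) * ∫⁻ x, f x ∂μ)
        = ∫⁻ p : ℝ × ℝ, (g p.1 * f p.2 + g p.2 * f p.1) ∂(μ.prod μ) := by
      rw [lintegral_add_left (by fun_prop), h3, h4]; ring
    rw [lhs, rhs]
    exact lintegral_mono key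
  have h2ne : (2 : ℝ≥0∞) ≠ 0 := by norm_num
  have h2top : (2 : ℝ≥0∞) ≠ ⊤ := by norm_num
  exact (ENNReal.mul_le_mul_iff_right h2ne h2top).mp hmain

/-! ### The chain probability `G` and the key induction -/

/-- `G κ k u` is the probability, under independent coordinates with laws `κ 0, …, κ k`,
that `x 0 < x 1 < ⋯ < x k` and `x k < u`. -/
noncomputable def G (κ : ℕ → Measure ℝ) : ℕ → ℝ → ℝ≥0∞
  | 0, u => κ 0 (Set.Iio u)
  | k + 1, u => ∫⁻ v, G κ k v * (Set.Iio u).indicator 1 v ∂κ (k + 1)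

lemma G_mono (κ : ℕ → Measure ℝ) : ∀ k, Monotone (G κ k) := by
  intro k
  induction k with
  | zero => exact fun u u' h => measure_mono (Set.Iio_subset_Iio h)
  | succ k ih =>
      intro u u' h
      refine lintegral_mono fun v => mul_le_mul_right ?_ _
      exact Set.indicator_le_indicator_of_subset (Set.Iio_subset_Iio h) (fun _ => zero_le) v

lemma G_measurable (κ : ℕ → Measure ℝ) (k : ℕ) : Measurable (G κ k) :=
  (G_mono κ k).measurable

/-- `Q κ i` is the probability that coordinate `i` is below coordinate `i+1`. -/
noncomputable def Q (κ : ℕ → Measure ℝ) (i : ℕ) : ℝ≥0∞ :=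
  ∫⁻ v, κ (i + 1) (Set.Ioi v) ∂κ i

lemma indicator_flip (v : ℝ) :
    (fun u : ℝ => (Set.Iio u).indicator (1 : ℝ → ℝ≥0∞) v)
      = (Set.Ioi v).indicator (1 : ℝ → ℝ≥0∞) := by
  ext u; by_cases h : v < u <;> simp [Set.indicator, h]

lemma lint_swap (g : ℝ → ℝ≥0∞) (hg : Measurable g) (μ ν : Measure ℝ)
    [SigmaFinite μ] [SigmaFinite ν] :
    ∫⁻ u, ∫⁻ v, g v * (Set.Iio u).indicator 1 v ∂μ ∂ν
      = ∫⁻ v, g v * ν (Set.Ioi v) ∂μ := by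
  have hmeas : Measurable
      (Function.uncurry fun u v => g v * (Set.Iio u).indicator (1 : ℝ → ℝ≥0∞) v) := by
    have h1 : Measurable fun p : ℝ × ℝ => g p.2 := hg.comp measurable_snd
    have h2 : Measurable fun p : ℝ × ℝ => (Set.Iio p.1).indicator (1 : ℝ → ℝ≥0∞) p.2 := by
      have : (fun p : ℝ × ℝ => (Set.Iio p.1).indicator (1 : ℝ → ℝ≥0∞) p.2)
          = ({p : ℝ × ℝ | p.2 < p.1}).indicator (1 : ℝ × ℝ → ℝ≥0∞) := by
        ext p
        by_cases h : p.2 < p.1 <;> simp [Set.indicator, h]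
      rw [this]
      exact measurable_const.indicator (measurableSet_lt measurable_snd measurable_fst)
    exact h1.mul h2
  rw [lintegral_lintegral_swap hmeas.aemeasurable]
  congr 1
  ext v
  rw [lintegral_const_mul _ (by
    rw [indicator_flip]; exact measurable_const.indicator measurableSet_Ioi)]
  congr 1
  rw [indicator_flip, lintegral_indicator_one measurableSet_Ioi]

/-- The key induction: integrating the chain probability `G κ k` against the next law
is at most the product of the pairwise probabilities. -/
lemma G_lintegral_le (κ : ℕ → Measure ℝ) [∀ i, IsProbabilityMeasure (κ i)] :
    ∀ k, ∫⁻ u, G κ k u ∂κ (k + 1) ≤ ∏ i ∈ Finset.range (k + 1), Q κ i := by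
  intro k
  induction k with
  | zero =>
      have h : ∫⁻ u, G κ 0 u ∂κ 1 = Q κ 0 := by
        have h0 : ∀ u : ℝ, G κ 0 u = ∫⁻ v, (1 : ℝ≥0∞) * (Set.Iio u).indicator 1 v ∂κ 0 := by
          intro u
          simp only [one_mul]
          rw [lintegral_indicator_one measurableSet_Iio]; rfl
        calc ∫⁻ u, G κ 0 u ∂κ 1
            = ∫⁻ u, ∫⁻ v, (1 : ℝ≥0∞) * (Set.Iio u).indicator 1 v ∂κ 0 ∂κ 1 :=
              lintegral_congr h0
          _ = ∫⁻ v, (1 : ℝ≥0∞) * κ 1 (Set.Ioi v) ∂κ 0 :=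
              lint_swap _ measurable_const _ _
          _ = Q κ 0 := by simp [Q]
      simp [h]
  | succ k ih =>
      have h : ∫⁻ u, G κ (k + 1) u ∂κ (k + 2)
          = ∫⁻ v, G κ k v * κ (k + 2) (Set.Ioi v) ∂κ (k + 1) := by
        show ∫⁻ u, ∫⁻ v, G κ k v * (Set.Iio u).indicator 1 v ∂κ (k + 1) ∂κ (k + 2) = _
        exact lint_swap _ (G_measurable κ k) _ _
      rw [h, Finset.prod_range_succ]
      have hcheb := chebyshev (κ (k + 1)) (G_mono κ k)
        (f := fun v => κ (k + 2) (Set.Ioi v))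
        (fun v v' hvv' => measure_mono (Set.Ioi_subset_Ioi hvv'))
      refine hcheb.trans ?_
      exact mul_le_mul' ih le_rfl

/-! ### The set of increasing tuples under a product measure -/

/-- The set of strictly increasing tuples. -/
def chainSet (k : ℕ) : Set (Fin (k + 1) → ℝ) :=
  {x | ∀ i : Fin k, x i.castSucc < x i.succ}

lemma chainSet_measurable (k : ℕ) : MeasurableSet (chainSet k) := by
  have : chainSet k = ⋂ i : Fin k, {x : Fin (k + 1) → ℝ | x i.castSucc < x i.succ} := by
    ext x; simp [chainSet]
  rw [this]
  exact MeasurableSet.iInter fun i =>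
    measurableSet_lt (measurable_pi_apply _) (measurable_pi_apply _)

lemma peel (k : ℕ) (κ : ℕ → Measure ℝ) [∀ i, IsProbabilityMeasure (κ i)] :
    MeasurePreserving
      (MeasurableEquiv.piFinSuccAbove (fun _ : Fin (k + 2) => ℝ) (Fin.last (k + 1)))
      (Measure.pi fun i : Fin (k + 2) => κ i)
      ((κ (k + 1)).prod (Measure.pi fun i : Fin (k + 1) => κ i)) := by
  have h := measurePreserving_piFinSuccAbove (fun i : Fin (k + 2) => κ i) (Fin.last (k + 1))
  have h2 : (fun j : Fin (k + 1) => κ (((Fin.last (k + 1)).succAbove j) : Fin (k + 2)).val)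
      = fun j : Fin (k + 1) => κ j.val := by
    funext j; simp [Fin.succAbove_last]
  rw [h2] at h
  exact h

lemma peel_apply (k : ℕ) (x : Fin (k + 2) → ℝ) :
    (MeasurableEquiv.piFinSuccAbove (fun _ : Fin (k + 2) => ℝ) (Fin.last (k + 1))) x
      = (x (Fin.last (k + 1)), fun j : Fin (k + 1) => x j.castSucc) := by
  have : (MeasurableEquiv.piFinSuccAbove (fun _ : Fin (k + 2) => ℝ) (Fin.last (k + 1))) x
      = (x (Fin.last (k + 1)), fun j : Fin (k + 1) => x ((Fin.last (k + 1)).succAbove j)) := rfl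
  rw [this]
  simp [Fin.succAbove_last]

lemma chain_iff (k : ℕ) (x : Fin (k + 2) → ℝ) :
    x ∈ chainSet (k + 1) ↔
      ((fun j : Fin (k + 1) => x j.castSucc) ∈ chainSet k
        ∧ (fun j : Fin (k + 1) => x j.castSucc) (Fin.last k) < x (Fin.last (k + 1))) := by
  constructor
  · intro h
    refine ⟨fun i => ?_, ?_⟩
    · have := h i.castSucc
      rwa [Fin.succ_castSucc] at this
    · have := h (Fin.last k)
      rwa [Fin.succ_last] at this
  · rintro ⟨h1, h2⟩
    intro i
    induction i using Fin.lastCases with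
    | last => rw [Fin.succ_last]; exact h2
    | cast j => rw [Fin.succ_castSucc]; exact h1 j

lemma D (κ : ℕ → Measure ℝ) [∀ i, IsProbabilityMeasure (κ i)] :
    ∀ k, ∀ u : ℝ,
      (Measure.pi fun i : Fin (k + 1) => κ i)
        (chainSet k ∩ {y | y (Fin.last k) < u}) = G κ k u := by
  intro k
  induction k with
  | zero =>
      intro u
      have hconst : (fun i : Fin 1 => κ i.val) = fun _ : Fin 1 => κ 0 := by
        funext i; rw [Fin.eq_zero i]; rfl
      have hset : chainSet 0 ∩ {y : Fin 1 → ℝ | y (Fin.last 0) < u}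
          = (MeasurableEquiv.funUnique (Fin 1) ℝ) ⁻¹' (Set.Iio u) := by
        ext y
        have hd : (Fin.last 0) = (default : Fin 1) := rfl
        simp [chainSet, MeasurableEquiv.funUnique, hd]
      rw [hconst, hset]
      refine ((measurePreserving_funUnique (κ 0) (Fin 1)).measure_preimage
          measurableSet_Iio.nullMeasurableSet).trans ?_
      simp [G]
  | succ k ih =>
      intro u
      set e := MeasurableEquiv.piFinSuccAbove (fun _ : Fin (k + 2) => ℝ) (Fin.last (k + 1))
        with he
      set T : Set (ℝ × (Fin (k + 1) → ℝ)) :=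
        {p | (p.2 ∈ chainSet k ∧ p.2 (Fin.last k) < p.1) ∧ p.1 < u} with hT
      have hTmeas : MeasurableSet T := by
        refine (((chainSet_measurable k).preimage measurable_snd).inter ?_).inter ?_
        · exact measurableSet_lt ((measurable_pi_apply _).comp measurable_snd) measurable_fst
        · exact measurableSet_lt measurable_fst measurable_const
      have hset : chainSet (k + 1) ∩ {x : Fin (k + 2) → ℝ | x (Fin.last (k + 1)) < u}
          = e ⁻¹' T := by
        ext x
        simp only [Set.mem_inter_iff, Set.mem_preimage, he, peel_apply, hT, Set.mem_setOf_eq]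
        rw [chain_iff]
      rw [hset, (peel k κ).measure_preimage hTmeas.nullMeasurableSet,
        Measure.prod_apply hTmeas]
      show ∫⁻ t, (Measure.pi fun i : Fin (k + 1) => κ i) (Prod.mk t ⁻¹' T) ∂κ (k + 1) = _
      show _ = ∫⁻ v, G κ k v * (Set.Iio u).indicator 1 v ∂κ (k + 1)
      refine lintegral_congr fun t => ?_
      by_cases ht : t < u
      · have : Prod.mk t ⁻¹' T = chainSet k ∩ {y | y (Fin.last k) < t} := by
          ext y; simp [hT, ht]
        rw [this, ih t]
        simp [Set.indicator, ht]
      · have : Prod.mk t ⁻¹' T = ∅ := by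
          ext y; simp [hT, ht]
        rw [this]
        simp [Set.indicator, ht]

lemma top (κ : ℕ → Measure ℝ) [∀ i, IsProbabilityMeasure (κ i)] (k : ℕ) :
    (Measure.pi fun i : Fin (k + 2) => κ i) (chainSet (k + 1))
      = ∫⁻ t, G κ k t ∂κ (k + 1) := by
  set e := MeasurableEquiv.piFinSuccAbove (fun _ : Fin (k + 2) => ℝ) (Fin.last (k + 1)) with he
  set T : Set (ℝ × (Fin (k + 1) → ℝ)) :=
    {p | p.2 ∈ chainSet k ∧ p.2 (Fin.last k) < p.1} with hT
  have hTmeas : MeasurableSet T := by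
    refine ((chainSet_measurable k).preimage measurable_snd).inter ?_
    exact measurableSet_lt ((measurable_pi_apply _).comp measurable_snd) measurable_fst
  have hset : chainSet (k + 1) = e ⁻¹' T := by
    ext x
    simp only [Set.mem_preimage, he, peel_apply, hT, Set.mem_setOf_eq]
    rw [chain_iff]
  rw [hset, (peel k κ).measure_preimage hTmeas.nullMeasurableSet, Measure.prod_apply hTmeas]
  refine lintegral_congr fun t => ?_
  have : Prod.mk t ⁻¹' T = chainSet k ∩ {y | y (Fin.last k) < t} := by
    ext y; simp [hT]
  rw [this, D κ k t]

/-! ### Mapping independent random variables to the product measure -/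

lemma map_tuple {Ω : Type*} [MeasurableSpace Ω] (P : Measure Ω) [IsProbabilityMeasure P]
    (n : ℕ) (X : ℕ → Ω → ℝ) (hX : ∀ i < n, Measurable (X i))
    (hindep : iIndepFun (fun i : Fin n => X i) P) :
    P.map (fun ω (i : Fin n) => X i ω) = Measure.pi (fun i : Fin n => P.map (X i)) := by
  haveI : ∀ i : Fin n, IsProbabilityMeasure (P.map (X i)) := fun i =>
    Measure.isProbabilityMeasure_map (hX i i.isLt).aemeasurable
  refine (Measure.pi_eq fun s hs => ?_).symm
  have htup : Measurable (fun ω (i : Fin n) => X i ω) :=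
    measurable_pi_lambda _ fun i => hX i i.isLt
  rw [Measure.map_apply htup (MeasurableSet.univ_pi hs)]
  have hpre : (fun ω (i : Fin n) => X i ω) ⁻¹' (Set.pi Set.univ s)
      = ⋂ i ∈ Finset.univ, X (i : Fin n).val ⁻¹' s i := by
    ext ω; simp [Set.mem_pi]
  rw [hpre, hindep.measure_inter_preimage_eq_mul Finset.univ (fun i _ => hs i)]
  exact Finset.prod_congr rfl fun i _ => (Measure.map_apply (hX i i.isLt) (hs i)).symm

end ProbOrderAux

open ProbOrderAux

/-- For jointly independent Gaussian random variables `X 0, …, X (n−1)` (`n ≥ 2`),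
the probability that they occur in increasing index order is bounded above by the
product of the pairwise probabilities of successive pairs:
`P(X 0 < X 1 ∧ … ∧ X (n−2) < X (n−1)) ≤ ∏_{i=0}^{n−2} P(X i < X (i+1))`. -/
theorem prob_order_le_prod_pairwise
    {Ω : Type*} [MeasurableSpace Ω] (P : Measure Ω) [IsProbabilityMeasure P]
    (n : ℕ) (hn : 2 ≤ n)
    (X : ℕ → Ω → ℝ) (hX : ∀ i < n, Measurable (X i))
    (μ σ : ℕ → ℝ) (hσ : ∀ i < n, 0 < σ i)
    (hXd : ∀ i < n, Measure.map (X i) P = gaussianReal (μ i) ((σ i ^ 2).toNNReal))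
    (hindep : iIndepFun (fun i : Fin n => X i) P) :
    P {ω | ∀ i, i + 1 < n → X i ω < X (i + 1) ω} ≤
      ∏ i ∈ Finset.range (n - 1), P {ω | X i ω < X (i + 1) ω} := by
  obtain ⟨m, rfl⟩ : ∃ m, n = m + 2 := ⟨n - 2, by omega⟩
  classical
  set κ : ℕ → Measure ℝ := fun i => if i < m + 2 then P.map (X i) else Measure.dirac 0 with hκdef
  have hκ : ∀ i < m + 2, κ i = P.map (X i) := fun i h => if_pos h
  haveI : ∀ i, IsProbabilityMeasure (κ i) := by
    intro i
    by_cases h : i < m + 2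
    · rw [hκ i h]
      exact Measure.isProbabilityMeasure_map (hX i h).aemeasurable
    · rw [hκdef]
      simp only [if_neg h]
      infer_instance
  have htup : Measurable (fun ω (i : Fin (m + 2)) => X i ω) :=
    measurable_pi_lambda _ fun i => hX i i.isLt
  have hmap : P.map (fun ω (i : Fin (m + 2)) => X i ω)
      = Measure.pi (fun i : Fin (m + 2) => κ i) := by
    rw [map_tuple P (m + 2) X hX hindep]
    congr 1
    funext i
    rw [hκ i i.isLt]
  have hE : {ω | ∀ i, i + 1 < m + 2 → X i ω < X (i + 1) ω}
      = (fun ω (i : Fin (m + 2)) => X i ω) ⁻¹' chainSet (m + 1) := by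
    ext ω
    simp only [Set.mem_setOf_eq, Set.mem_preimage, chainSet]
    constructor
    · intro h j
      simpa using h j.val (by omega)
    · intro h i hi
      have := h ⟨i, by omega⟩
      simpa using this
  have hQ : ∀ i ∈ Finset.range (m + 1), Q κ i = P {ω | X i ω < X (i + 1) ω} := by
    intro i hi
    rw [Finset.mem_range] at hi
    have hi2 : i < m + 2 := by omega
    have hi3 : i + 1 < m + 2 := by omega
    haveI : IsProbabilityMeasure (P.map (X (i + 1))) :=
      Measure.isProbabilityMeasure_map (hX (i + 1) hi3).aemeasurable
    have hpair : IndepFun (X i) (X (i + 1)) P := by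
      have := hindep.indepFun (i := (⟨i, hi2⟩ : Fin (m + 2))) (j := (⟨i + 1, hi3⟩ : Fin (m + 2)))
        (by simp)
      exact this
    have hmap2 : P.map (fun ω => (X i ω, X (i + 1) ω))
        = (P.map (X i)).prod (P.map (X (i + 1))) :=
      (indepFun_iff_map_prod_eq_prod_map_map (hX i hi2).aemeasurable
        (hX (i + 1) hi3).aemeasurable).mp hpair
    have hlt : MeasurableSet {p : ℝ × ℝ | p.1 < p.2} :=
      measurableSet_lt measurable_fst measurable_snd
    have : P {ω | X i ω < X (i + 1) ω}
        = (P.map (fun ω => (X i ω, X (i + 1) ω))) {p : ℝ × ℝ | p.1 < p.2} := by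
      rw [Measure.map_apply ((hX i hi2).prodMk (hX (i + 1) hi3)) hlt]
      rfl
    rw [this, hmap2, Measure.prod_apply hlt, Q, hκ i hi2, hκ (i + 1) hi3]
    rfl
  calc P {ω | ∀ i, i + 1 < m + 2 → X i ω < X (i + 1) ω}
      = (P.map (fun ω (i : Fin (m + 2)) => X i ω)) (chainSet (m + 1)) := by
        rw [hE, ← Measure.map_apply htup (chainSet_measurable (m + 1))]
    _ = (Measure.pi fun i : Fin (m + 2) => κ i) (chainSet (m + 1)) := by rw [hmap]
    _ = ∫⁻ t, G κ m t ∂κ (m + 1) := top κ m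
    _ ≤ ∏ i ∈ Finset.range (m + 1), Q κ i := G_lintegral_le κ m
    _ = ∏ i ∈ Finset.range (m + 2 - 1), P {ω | X i ω < X (i + 1) ω} :=
        Finset.prod_congr rfl hQ
end

section
/- Let X₁, X₂, X₃ be independent real-valued Gaussian random variables with Xᵢ ~ N(μᵢ, σᵢ²), σᵢ > 0. Then P(X₁ < X₂ ∧ X₂ < X₃) ≤ P(X₁ < X₂)·P(X₂ < X₃). -/
open MeasureTheory ProbabilityTheory

open scoped ENNReal

/-- Chebyshev's correlation inequality for `ℝ≥0∞`-valued functions: a monotone and an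
antitone function are negatively correlated. -/
lemma lintegral_mul_le_of_monotone_antitone {ν : Measure ℝ} [IsProbabilityMeasure ν]
    {f g : ℝ → ℝ≥0∞} (hf : Monotone f) (hg : Antitone g) :
    ∫⁻ t, f t * g t ∂ν ≤ (∫⁻ t, f t ∂ν) * ∫⁻ t, g t ∂ν := by
  have hfm : Measurable f := hf.measurable
  have hgm : Measurable g := hg.measurable
  -- key pointwise rearrangement inequality
  have key : ∀ a b c d : ℝ≥0∞, a ≤ b → d ≤ c → a * c + b * d ≤ a * d + b * c := by
    intro a b c d hab hdc
    calc a * c + b * d = a * ((c - d) + d) + b * d := by rw [tsub_add_cancel_of_le hdc]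
      _ = a * (c - d) + a * d + b * d := by rw [mul_add]
      _ ≤ b * (c - d) + a * d + b * d := by
          gcongr
      _ = a * d + (b * (c - d) + b * d) := by ring
      _ = a * d + b * ((c - d) + d) := by rw [mul_add]
      _ = a * d + b * c := by rw [tsub_add_cancel_of_le hdc]
  have hpt : ∀ x y : ℝ, f x * g x + f y * g y ≤ f x * g y + f y * g x := by
    intro x y
    rcases le_total x y with h | h
    · exact key _ _ _ _ (hf h) (hg h)
    · rw [add_comm, add_comm (f x * g y)]
      exact key _ _ _ _ (hf h) (hg h)
  set I := ∫⁻ t, f t * g t ∂ν with hI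
  set J := (∫⁻ t, f t ∂ν) * ∫⁻ t, g t ∂ν with hJ
  have h1 : ∫⁻ p : ℝ × ℝ, (f p.1 * g p.1 + f p.2 * g p.2) ∂(ν.prod ν) = I + I := by
    have m1 : Measurable fun p : ℝ × ℝ => f p.1 * g p.1 :=
      (hfm.comp measurable_fst).mul (hgm.comp measurable_fst)
    rw [lintegral_add_left m1]
    congr 1
    · have := lintegral_prod_mul (μ := ν) (ν := ν) ((hfm.mul hgm).aemeasurable)
        (aemeasurable_const (b := (1 : ℝ≥0∞)))
      simpa using this
    · have := lintegral_prod_mul (μ := ν) (ν := ν) (aemeasurable_const (b := (1 : ℝ≥0∞)))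
        ((hfm.mul hgm).aemeasurable)
      simpa using this
  have h2 : ∫⁻ p : ℝ × ℝ, (f p.1 * g p.2 + f p.2 * g p.1) ∂(ν.prod ν) = J + J := by
    have m2 : Measurable fun p : ℝ × ℝ => f p.1 * g p.2 :=
      (hfm.comp measurable_fst).mul (hgm.comp measurable_snd)
    rw [lintegral_add_left m2]
    congr 1
    · exact lintegral_prod_mul hfm.aemeasurable hgm.aemeasurable
    · have : ∫⁻ a : ℝ × ℝ, f a.2 * g a.1 ∂ν.prod ν = ∫⁻ a : ℝ × ℝ, g a.1 * f a.2 ∂ν.prod ν :=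
        lintegral_congr fun a => mul_comm _ _
      rw [this, lintegral_prod_mul hgm.aemeasurable hfm.aemeasurable, mul_comm]
  have hmono : I + I ≤ J + J := by
    rw [← h1, ← h2]
    exact lintegral_mono fun p => hpt p.1 p.2
  by_contra hcon
  push_neg at hcon
  exact absurd hmono (not_le.mpr (ENNReal.add_lt_add hcon hcon))

/-- For three jointly independent Gaussian random variables `X₁, X₂, X₃`,
`P(X₁ < X₂ ∧ X₂ < X₃) ≤ P(X₁ < X₂) · P(X₂ < X₃)`. -/
theorem prob_order_three_le_prod_pairwise
    {Ω : Type*} [MeasurableSpace Ω] (P : Measure Ω) [IsProbabilityMeasure P]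
    (X₁ X₂ X₃ : Ω → ℝ) (h₁ : Measurable X₁) (h₂ : Measurable X₂) (h₃ : Measurable X₃)
    (μ₁ μ₂ μ₃ σ₁ σ₂ σ₃ : ℝ) (hσ₁ : 0 < σ₁) (hσ₂ : 0 < σ₂) (hσ₃ : 0 < σ₃)
    (hd₁ : Measure.map X₁ P = gaussianReal μ₁ (σ₁ ^ 2).toNNReal)
    (hd₂ : Measure.map X₂ P = gaussianReal μ₂ (σ₂ ^ 2).toNNReal)
    (hd₃ : Measure.map X₃ P = gaussianReal μ₃ (σ₃ ^ 2).toNNReal)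
    (hindep : iIndepFun ![X₁, X₂, X₃] P) :
    P {ω | X₁ ω < X₂ ω ∧ X₂ ω < X₃ ω} ≤
      P {ω | X₁ ω < X₂ ω} * P {ω | X₂ ω < X₃ ω} := by
  set ν₁ := P.map X₁ with hν₁
  set ν₂ := P.map X₂ with hν₂
  set ν₃ := P.map X₃ with hν₃
  have hP₂ : IsProbabilityMeasure ν₂ := by rw [hd₂]; infer_instance
  have hmeas : ∀ i, Measurable (![X₁, X₂, X₃] i) := by
    intro i; fin_cases i <;> assumption
  -- independence facts
  have h13 : IndepFun X₁ X₃ P := by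
    have := hindep.indepFun (i := 0) (j := 2) (by decide)
    simpa using this
  have h21 : IndepFun X₂ X₁ P := by
    have := hindep.indepFun (i := 1) (j := 0) (by decide)
    simpa using this
  have h23 : IndepFun X₂ X₃ P := by
    have := hindep.indepFun (i := 1) (j := 2) (by decide)
    simpa using this
  have h2_13 : IndepFun X₂ (fun ω => (X₁ ω, X₃ ω)) P := by
    have := (hindep.indepFun_prodMk hmeas 0 2 1 (by decide) (by decide)).symm
    simpa using this
  -- map equalities
  have hmap13 : P.map (fun ω => (X₁ ω, X₃ ω)) = ν₁.prod ν₃ :=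
    (indepFun_iff_map_prod_eq_prod_map_map h₁.aemeasurable h₃.aemeasurable).mp h13
  have hmap : P.map (fun ω => (X₂ ω, (X₁ ω, X₃ ω))) = ν₂.prod (ν₁.prod ν₃) := by
    rw [(indepFun_iff_map_prod_eq_prod_map_map h₂.aemeasurable
      (h₁.prodMk h₃).aemeasurable).mp h2_13, hmap13]
  have hmap21 : P.map (fun ω => (X₂ ω, X₁ ω)) = ν₂.prod ν₁ :=
    (indepFun_iff_map_prod_eq_prod_map_map h₂.aemeasurable h₁.aemeasurable).mp h21
  have hmap23 : P.map (fun ω => (X₂ ω, X₃ ω)) = ν₂.prod ν₃ :=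
    (indepFun_iff_map_prod_eq_prod_map_map h₂.aemeasurable h₃.aemeasurable).mp h23
  -- the two marginal functions
  set f : ℝ → ℝ≥0∞ := fun t => ν₁ (Set.Iio t) with hf
  set g : ℝ → ℝ≥0∞ := fun t => ν₃ (Set.Ioi t) with hg
  have hfmono : Monotone f := fun a b hab => measure_mono (Set.Iio_subset_Iio hab)
  have hganti : Antitone g := fun a b hab => measure_mono (Set.Ioi_subset_Ioi hab)
  -- rewrite the three probabilities as integrals over ν₂
  have hs1 : MeasurableSet {p : ℝ × ℝ × ℝ | p.2.1 < p.1 ∧ p.1 < p.2.2} :=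
    (measurableSet_lt (measurable_fst.comp measurable_snd) measurable_fst).inter
      (measurableSet_lt measurable_fst (measurable_snd.comp measurable_snd))
  have e1 : P {ω | X₁ ω < X₂ ω ∧ X₂ ω < X₃ ω} = ∫⁻ t, f t * g t ∂ν₂ := by
    have := Measure.map_apply (μ := P) (h₂.prodMk (h₁.prodMk h₃)) hs1
    rw [hmap] at this
    have hpre : (fun ω => (X₂ ω, (X₁ ω, X₃ ω))) ⁻¹' {p : ℝ × ℝ × ℝ | p.2.1 < p.1 ∧ p.1 < p.2.2}
        = {ω | X₁ ω < X₂ ω ∧ X₂ ω < X₃ ω} := rfl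
    rw [hpre] at this
    rw [← this, Measure.prod_apply hs1]
    refine lintegral_congr fun t => ?_
    have : (Prod.mk t ⁻¹' {p : ℝ × ℝ × ℝ | p.2.1 < p.1 ∧ p.1 < p.2.2})
        = Set.Iio t ×ˢ Set.Ioi t := by
      ext q; simp [Set.mem_prod, and_comm]
    rw [this, Measure.prod_prod]
  have e2 : P {ω | X₁ ω < X₂ ω} = ∫⁻ t, f t ∂ν₂ := by
    have hs : MeasurableSet {p : ℝ × ℝ | p.2 < p.1} :=
      measurableSet_lt measurable_snd measurable_fst
    have := Measure.map_apply (μ := P) (h₂.prodMk h₁) hs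
    rw [hmap21] at this
    have hpre : (fun ω => (X₂ ω, X₁ ω)) ⁻¹' {p : ℝ × ℝ | p.2 < p.1}
        = {ω | X₁ ω < X₂ ω} := rfl
    rw [hpre] at this
    rw [← this, Measure.prod_apply hs]
    exact lintegral_congr fun t => rfl
  have e3 : P {ω | X₂ ω < X₃ ω} = ∫⁻ t, g t ∂ν₂ := by
    have hs : MeasurableSet {p : ℝ × ℝ | p.1 < p.2} :=
      measurableSet_lt measurable_fst measurable_snd
    have := Measure.map_apply (μ := P) (h₂.prodMk h₃) hs
    rw [hmap23] at this
    have hpre : (fun ω => (X₂ ω, X₃ ω)) ⁻¹' {p : ℝ × ℝ | p.1 < p.2}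
        = {ω | X₂ ω < X₃ ω} := rfl
    rw [hpre] at this
    rw [← this, Measure.prod_apply hs]
    exact lintegral_congr fun t => rfl
  rw [e1, e2, e3]
  exact lintegral_mul_le_of_monotone_antitone hfmono hganti
end

section
/- Let X and Y be independent real-valued Gaussian random variables with X ~ N(μX, σ²) and Y ~ N(μY, σ²), where σ > 0 and μX < μY, and let a < b be real numbers. Then P(X < Y | a < X < b and a < Y < b) > P(Y < X | a < X < b and a < Y < b). -/
open MeasureTheory ProbabilityTheory

open scoped ENNReal NNReal

lemma gaussianPDFReal_cross_lt {μ1 μ2 : ℝ} {v : ℝ≥0} (hv : v ≠ 0) (hμ : μ1 < μ2)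
    {x y : ℝ} (hxy : x < y) :
    gaussianPDFReal μ2 v x * gaussianPDFReal μ1 v y <
      gaussianPDFReal μ1 v x * gaussianPDFReal μ2 v y := by
  have hv' : (0:ℝ) < v := by exact_mod_cast pos_iff_ne_zero.mpr hv
  simp only [gaussianPDFReal]
  have hc : (0:ℝ) < (Real.sqrt (2 * Real.pi * v))⁻¹ * (Real.sqrt (2 * Real.pi * v))⁻¹ := by
    positivity
  have key : Real.exp (-(x - μ2) ^ 2 / (2 * v)) * Real.exp (-(y - μ1) ^ 2 / (2 * v)) <
      Real.exp (-(x - μ1) ^ 2 / (2 * v)) * Real.exp (-(y - μ2) ^ 2 / (2 * v)) := by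
    rw [← Real.exp_add, ← Real.exp_add, Real.exp_lt_exp, ← add_div, ← add_div,
      div_lt_div_iff_of_pos_right (by positivity)]
    nlinarith [mul_pos (sub_pos.mpr hxy) (sub_pos.mpr hμ)]
  nlinarith [mul_lt_mul_of_pos_left key hc]

lemma gaussianPDF_cross_lt {μ1 μ2 : ℝ} {v : ℝ≥0} (hv : v ≠ 0) (hμ : μ1 < μ2)
    {x y : ℝ} (hxy : x < y) :
    gaussianPDF μ2 v x * gaussianPDF μ1 v y < gaussianPDF μ1 v x * gaussianPDF μ2 v y := by
  simp only [gaussianPDF]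
  rw [← ENNReal.ofReal_mul (gaussianPDFReal_nonneg _ _ _),
    ← ENNReal.ofReal_mul (gaussianPDFReal_nonneg _ _ _)]
  exact (ENNReal.ofReal_lt_ofReal_iff
    (mul_pos (gaussianPDFReal_pos μ1 v x hv) (gaussianPDFReal_pos μ2 v y hv))).mpr
    (gaussianPDFReal_cross_lt hv hμ hxy)

lemma gaussianReal_prod_eq (μ1 μ2 : ℝ) {v : ℝ≥0} (hv : v ≠ 0) :
    (gaussianReal μ1 v).prod (gaussianReal μ2 v) =
      ((volume : Measure ℝ).prod volume).withDensity
        (fun p => gaussianPDF μ1 v p.1 * gaussianPDF μ2 v p.2) := by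
  refine Measure.prod_eq fun s t hs ht => ?_
  rw [withDensity_apply _ (hs.prod ht), ← Measure.prod_restrict,
    lintegral_prod_mul (measurable_gaussianPDF _ _).aemeasurable
      (measurable_gaussianPDF _ _).aemeasurable,
    gaussianReal_of_var_ne_zero _ hv, gaussianReal_of_var_ne_zero _ hv,
    withDensity_apply _ hs, withDensity_apply _ ht]

/-- For independent Gaussian random variables `X ~ N(μX, σ²)` and `Y ~ N(μY, σ²)` with
equal variances and `μX < μY`, conditioned on both lying in `(a, b)`, it is more likely
that `X < Y` than that `Y < X`. -/
theorem cond_prob_lt_gt_of_gaussian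
    {Ω : Type*} [MeasurableSpace Ω] (P : Measure Ω) [IsProbabilityMeasure P]
    (X Y : Ω → ℝ) (hX : Measurable X) (hY : Measurable Y)
    (μX μY σ a b : ℝ) (hσ : 0 < σ) (hμ : μX < μY) (hab : a < b)
    (hXd : Measure.map X P = gaussianReal μX (σ ^ 2).toNNReal)
    (hYd : Measure.map Y P = gaussianReal μY (σ ^ 2).toNNReal)
    (hindep : IndepFun X Y P)
    (hpos : P ({ω | a < X ω ∧ X ω < b} ∩ {ω | a < Y ω ∧ Y ω < b}) ≠ 0) :
    (ProbabilityTheory.cond P ({ω | a < X ω ∧ X ω < b} ∩ {ω | a < Y ω ∧ Y ω < b}))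
        {ω | X ω < Y ω} >
      (ProbabilityTheory.cond P ({ω | a < X ω ∧ X ω < b} ∩ {ω | a < Y ω ∧ Y ω < b}))
        {ω | Y ω < X ω} := by
  set v : ℝ≥0 := (σ ^ 2).toNNReal with hv_def
  have hv : v ≠ 0 := by
    simp only [hv_def, ne_eq, Real.toNNReal_eq_zero, not_le]
    positivity
  set E : Set Ω := {ω | a < X ω ∧ X ω < b} ∩ {ω | a < Y ω ∧ Y ω < b} with hE_def
  have hEm : MeasurableSet E := by
    exact ((measurableSet_lt measurable_const hX).inter (measurableSet_lt hX measurable_const)).inter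
      ((measurableSet_lt measurable_const hY).inter (measurableSet_lt hY measurable_const))
  set T : Set (ℝ × ℝ) := (Set.Ioo a b ×ˢ Set.Ioo a b) ∩ {p : ℝ × ℝ | p.1 < p.2} with hT_def
  have hTo : IsOpen T := ((isOpen_Ioo.prod isOpen_Ioo).inter
    (isOpen_lt continuous_fst continuous_snd))
  have hTm : MeasurableSet T := hTo.measurableSet
  -- preimage identities
  have h1 : E ∩ {ω | X ω < Y ω} = (fun ω => (X ω, Y ω)) ⁻¹' T := by
    ext ω; simp [hE_def, hT_def, Set.mem_Ioo]; try tauto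
  have h2 : E ∩ {ω | Y ω < X ω} = (fun ω => (Y ω, X ω)) ⁻¹' T := by
    ext ω; simp [hE_def, hT_def, Set.mem_Ioo]; try tauto
  -- joint laws
  have hmapXY : P.map (fun ω => (X ω, Y ω)) = (gaussianReal μX v).prod (gaussianReal μY v) := by
    rw [(indepFun_iff_map_prod_eq_prod_map_map hX.aemeasurable hY.aemeasurable).mp hindep,
      hXd, hYd]
  have hmapYX : P.map (fun ω => (Y ω, X ω)) = (gaussianReal μY v).prod (gaussianReal μX v) := by
    rw [(indepFun_iff_map_prod_eq_prod_map_map hY.aemeasurable hX.aemeasurable).mp hindep.symm,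
      hXd, hYd]
  have hPA : P (E ∩ {ω | X ω < Y ω}) =
      ∫⁻ p in T, gaussianPDF μX v p.1 * gaussianPDF μY v p.2 ∂((volume : Measure ℝ).prod volume) := by
    rw [h1, ← Measure.map_apply (hX.prodMk hY) hTm, hmapXY, gaussianReal_prod_eq _ _ hv,
      withDensity_apply _ hTm]
  have hPB : P (E ∩ {ω | Y ω < X ω}) =
      ∫⁻ p in T, gaussianPDF μY v p.1 * gaussianPDF μX v p.2 ∂((volume : Measure ℝ).prod volume) := by
    rw [h2, ← Measure.map_apply (hY.prodMk hX) hTm, hmapYX, gaussianReal_prod_eq _ _ hv,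
      withDensity_apply _ hTm]
  -- positivity of Lebesgue measure of T
  have hTne : T.Nonempty := by
    refine ⟨(a + (b - a) / 3, b - (b - a) / 3), ?_⟩
    constructor
    · constructor <;> constructor <;> simp only [] <;> linarith
    · simp only [Set.mem_setOf_eq]; linarith
  have hTpos : ((volume : Measure ℝ).prod volume) T ≠ 0 :=
    (hTo.measure_pos _ hTne).ne'
  -- finiteness
  have hfin : (∫⁻ p in T, gaussianPDF μY v p.1 * gaussianPDF μX v p.2
      ∂((volume : Measure ℝ).prod volume)) ≠ ∞ := by
    rw [← withDensity_apply _ hTm, ← gaussianReal_prod_eq _ _ hv]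
    exact measure_ne_top _ _
  -- strict inequality of the two measures
  have hlt : P (E ∩ {ω | Y ω < X ω}) < P (E ∩ {ω | X ω < Y ω}) := by
    rw [hPA, hPB]
    refine setLIntegral_strict_mono hTm hTpos
      (((measurable_gaussianPDF μX v).comp measurable_fst).mul
        ((measurable_gaussianPDF μY v).comp measurable_snd)) hfin ?_
    refine Filter.Eventually.of_forall fun p hp => ?_
    exact gaussianPDF_cross_lt hv hμ hp.2
  -- conclude via conditional probability
  rw [cond_apply hEm, cond_apply hEm]
  have h0 : (P E)⁻¹ ≠ 0 := by
    simp only [ne_eq, ENNReal.inv_eq_zero]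
    exact measure_ne_top _ _
  have ht : (P E)⁻¹ ≠ ∞ := by
    simpa [ENNReal.inv_eq_top] using hpos
  exact ENNReal.mul_lt_mul_right h0 ht hlt
end

section
/- Let μX < μY be real numbers, σ > 0, and a < b real numbers. Let p_{X|a<X<b} and p_{Y|a<Y<b} denote the densities of the normal distributions N(μX, σ²) and N(μY, σ²) truncated to the interval (a, b). Then there exists exactly one x in (a, b) with p_{X|a<X<b}(x) = p_{Y|a<Y<b}(x). -/
open MeasureTheory

/-- The density of `N(μ, σ²)` truncated to the interval `(a, b)`:
`p(x) = (1/σ)·φ((x−μ)/σ) / (Φ((b−μ)/σ) − Φ((a−μ)/σ))` for `a ≤ x ≤ b`, `0` otherwise. -/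
noncomputable def truncNormalPDF (μ σ a b x : ℝ) : ℝ :=
  if a ≤ x ∧ x ≤ b then
    (1 / σ) * stdNormalPDF ((x - μ) / σ) /
      (stdNormalCDF ((b - μ) / σ) - stdNormalCDF ((a - μ) / σ))
  else 0

lemma stdNormalPDF_pos (x : ℝ) : 0 < stdNormalPDF x := by
  unfold stdNormalPDF
  positivity

lemma continuous_stdNormalPDF : Continuous stdNormalPDF := by
  unfold stdNormalPDF
  fun_prop

lemma integrable_stdNormalPDF : Integrable stdNormalPDF := by
  have h : Integrable (fun x : ℝ => Real.exp (-(1/2) * x ^ 2)) :=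
    integrable_exp_neg_mul_sq (by norm_num)
  have := h.div_const (Real.sqrt (2 * Real.pi))
  refine this.congr (Filter.Eventually.of_forall fun x => ?_)
  unfold stdNormalPDF
  ring_nf

lemma cdf_sub (A B : ℝ) :
    stdNormalCDF B - stdNormalCDF A = ∫ x in A..B, stdNormalPDF x := by
  unfold stdNormalCDF
  exact intervalIntegral.integral_Iic_sub_Iic
    integrable_stdNormalPDF.integrableOn integrable_stdNormalPDF.integrableOn

lemma cdf_sub_eq (μ σ a b : ℝ) (hσ : 0 < σ) :
    stdNormalCDF ((b - μ)/σ) - stdNormalCDF ((a - μ)/σ)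
      = (1/σ) * ∫ t in a..b, stdNormalPDF ((t - μ)/σ) := by
  rw [cdf_sub]
  have h1 : (∫ t in a..b, stdNormalPDF ((t - μ)/σ))
      = ∫ t in (a - μ)..(b - μ), stdNormalPDF (t/σ) := by
    rw [← intervalIntegral.integral_comp_sub_right (fun t => stdNormalPDF (t/σ)) μ]
  rw [h1, intervalIntegral.integral_comp_div _ hσ.ne', smul_eq_mul]
  field_simp

lemma mul_pdf_lt {u v u' v' : ℝ} (h : u^2 + v^2 < u'^2 + v'^2) :
    stdNormalPDF u' * stdNormalPDF v' < stdNormalPDF u * stdNormalPDF v := by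
  unfold stdNormalPDF
  rw [div_mul_div_comm, div_mul_div_comm, ← Real.exp_add, ← Real.exp_add]
  rw [div_lt_div_iff_of_pos_right (by positivity)]
  exact Real.exp_lt_exp.2 (by linarith)

lemma intervalIntegrable_pdf (μ σ a b : ℝ) :
    IntervalIntegrable (fun t => stdNormalPDF ((t - μ)/σ)) MeasureTheory.volume a b :=
  (continuous_stdNormalPDF.comp (by fun_prop)).intervalIntegrable a b

lemma intI_pos (μ σ a b : ℝ) (hab : a < b) :
    0 < ∫ t in a..b, stdNormalPDF ((t - μ)/σ) :=
  intervalIntegral.intervalIntegral_pos_of_pos (intervalIntegrable_pdf μ σ a b)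
    (fun x => stdNormalPDF_pos _) hab

lemma key_left (μX μY σ a b : ℝ) (hμ : μX < μY) (hσ : 0 < σ) (hab : a < b) :
    stdNormalPDF ((a - μY)/σ) * (∫ t in a..b, stdNormalPDF ((t - μX)/σ))
      < stdNormalPDF ((a - μX)/σ) * (∫ t in a..b, stdNormalPDF ((t - μY)/σ)) := by
  have hiX := intervalIntegrable_pdf μX σ a b
  have hiY := intervalIntegrable_pdf μY σ a b
  rw [← sub_pos, ← intervalIntegral.integral_const_mul, ← intervalIntegral.integral_const_mul,
    ← intervalIntegral.integral_sub (hiY.const_mul _) (hiX.const_mul _)]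
  apply intervalIntegral.intervalIntegral_pos_of_pos_on
    ((hiY.const_mul _).sub (hiX.const_mul _)) _ hab
  intro t ht
  rw [sub_pos]
  apply mul_pdf_lt
  have h1 : (0:ℝ) < σ^2 := by positivity
  rw [div_pow, div_pow, div_pow, div_pow, ← add_div, ← add_div,
    div_lt_div_iff_of_pos_right h1]
  nlinarith [mul_pos (sub_pos.2 hμ) (sub_pos.2 ht.1)]

lemma key_right (μX μY σ a b : ℝ) (hμ : μX < μY) (hσ : 0 < σ) (hab : a < b) :
    stdNormalPDF ((b - μX)/σ) * (∫ t in a..b, stdNormalPDF ((t - μY)/σ))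
      < stdNormalPDF ((b - μY)/σ) * (∫ t in a..b, stdNormalPDF ((t - μX)/σ)) := by
  have hiX := intervalIntegrable_pdf μX σ a b
  have hiY := intervalIntegrable_pdf μY σ a b
  rw [← sub_pos, ← intervalIntegral.integral_const_mul, ← intervalIntegral.integral_const_mul,
    ← intervalIntegral.integral_sub (hiX.const_mul _) (hiY.const_mul _)]
  apply intervalIntegral.intervalIntegral_pos_of_pos_on
    ((hiX.const_mul _).sub (hiY.const_mul _)) _ hab
  intro t ht
  rw [sub_pos]
  apply mul_pdf_lt
  have h1 : (0:ℝ) < σ^2 := by positivity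
  rw [div_pow, div_pow, div_pow, div_pow, ← add_div, ← add_div,
    div_lt_div_iff_of_pos_right h1]
  nlinarith [mul_pos (sub_pos.2 hμ) (sub_pos.2 ht.2)]

lemma log_bound {u v D1 D2 : ℝ} (hD1 : 0 < D1) (hD2 : 0 < D2)
    (h : stdNormalPDF v * D1 < stdNormalPDF u * D2) :
    -v^2/2 + Real.log D1 < -u^2/2 + Real.log D2 := by
  have h0 : 0 < stdNormalPDF v * D1 := mul_pos (stdNormalPDF_pos v) hD1
  have hlog : ∀ w : ℝ, Real.log (stdNormalPDF w)
      = -w^2/2 - Real.log (Real.sqrt (2*Real.pi)) := by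
    intro w
    unfold stdNormalPDF
    rw [Real.log_div (Real.exp_ne_zero _) (by positivity), Real.log_exp]
  have h2 := Real.log_lt_log h0 h
  rw [Real.log_mul (stdNormalPDF_pos v).ne' hD1.ne',
    Real.log_mul (stdNormalPDF_pos u).ne' hD2.ne', hlog, hlog] at h2
  linarith

lemma eq_iff_lin (μX μY σ : ℝ) (hσ : 0 < σ) {DX DY : ℝ} (hDX : 0 < DX) (hDY : 0 < DY)
    (x : ℝ) :
    (1/σ) * stdNormalPDF ((x - μX)/σ) / DX = (1/σ) * stdNormalPDF ((x - μY)/σ) / DY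
      ↔ (μX - μY) * (2*x - μX - μY) = 2*σ^2*(Real.log DX - Real.log DY) := by
  have hs : Real.sqrt (2*Real.pi) ≠ 0 := by positivity
  rw [div_eq_div_iff hDX.ne' hDY.ne', mul_assoc, mul_assoc,
    mul_right_inj' (one_div_ne_zero hσ.ne')]
  unfold stdNormalPDF
  rw [div_mul_eq_mul_div, div_mul_eq_mul_div, div_eq_div_iff hs hs, mul_left_inj' hs]
  rw [show Real.exp (-((x-μX)/σ)^2/2) * DY = Real.exp (-((x-μX)/σ)^2/2 + Real.log DY) by
        rw [Real.exp_add, Real.exp_log hDY],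
      show Real.exp (-((x-μY)/σ)^2/2) * DX = Real.exp (-((x-μY)/σ)^2/2 + Real.log DX) by
        rw [Real.exp_add, Real.exp_log hDX],
      Real.exp_eq_exp]
  have hσ2 : (σ:ℝ)^2 ≠ 0 := pow_ne_zero 2 hσ.ne'
  constructor
  · intro h
    field_simp at h
    linear_combination h
  · intro h
    field_simp
    linear_combination h

/-- For `μX < μY`, `σ > 0` and `a < b`, the truncated normal densities of `N(μX, σ²)` and
`N(μY, σ²)` on `(a, b)` intersect at exactly one point of `(a, b)`. -/
theorem truncNormalPDF_eq_unique
    (μX μY σ a b : ℝ) (hμ : μX < μY) (hσ : 0 < σ) (hab : a < b) :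
    ∃! x, x ∈ Set.Ioo a b ∧
      truncNormalPDF μX σ a b x = truncNormalPDF μY σ a b x := by
  have hμne : μX - μY ≠ 0 := sub_ne_zero.2 hμ.ne
  have hσ2 : (0:ℝ) < 2*σ^2 := by positivity
  have hIX := intI_pos μX σ a b hab
  have hIY := intI_pos μY σ a b hab
  have hDXe := cdf_sub_eq μX σ a b hσ
  have hDYe := cdf_sub_eq μY σ a b hσ
  have hDX : 0 < stdNormalCDF ((b - μX)/σ) - stdNormalCDF ((a - μX)/σ) := by
    rw [hDXe]; exact mul_pos (by positivity) hIX
  have hDY : 0 < stdNormalCDF ((b - μY)/σ) - stdNormalCDF ((a - μY)/σ) := by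
    rw [hDYe]; exact mul_pos (by positivity) hIY
  set lX := Real.log (stdNormalCDF ((b - μX)/σ) - stdNormalCDF ((a - μX)/σ)) with hlX
  set lY := Real.log (stdNormalCDF ((b - μY)/σ) - stdNormalCDF ((a - μY)/σ)) with hlY
  -- equivalence with a linear equation
  have hEquiv : ∀ x ∈ Set.Ioo a b,
      (truncNormalPDF μX σ a b x = truncNormalPDF μY σ a b x ↔
        (μX - μY) * (2*x - μX - μY) = 2*σ^2*(lX - lY)) := by
    intro x hx
    simp only [truncNormalPDF]
    rw [if_pos ⟨hx.1.le, hx.2.le⟩, if_pos ⟨hx.1.le, hx.2.le⟩]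
    exact eq_iff_lin μX μY σ hσ hDX hDY x
  -- bound at a
  have hla : 2*σ^2*(lX - lY) < (μX - μY) * (2*a - μX - μY) := by
    have h1 := key_left μX μY σ a b hμ hσ hab
    have h2 : stdNormalPDF ((a - μY)/σ) * (stdNormalCDF ((b - μX)/σ) - stdNormalCDF ((a - μX)/σ))
        < stdNormalPDF ((a - μX)/σ) * (stdNormalCDF ((b - μY)/σ) - stdNormalCDF ((a - μY)/σ)) := by
      rw [hDXe, hDYe]
      calc stdNormalPDF ((a - μY)/σ) * ((1/σ) * ∫ t in a..b, stdNormalPDF ((t - μX)/σ))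
          = (1/σ) * (stdNormalPDF ((a - μY)/σ) * ∫ t in a..b, stdNormalPDF ((t - μX)/σ)) := by
            ring
        _ < (1/σ) * (stdNormalPDF ((a - μX)/σ) * ∫ t in a..b, stdNormalPDF ((t - μY)/σ)) :=
            mul_lt_mul_of_pos_left h1 (by positivity)
        _ = stdNormalPDF ((a - μX)/σ) * ((1/σ) * ∫ t in a..b, stdNormalPDF ((t - μY)/σ)) := by
            ring
    have h3 := log_bound hDX hDY h2
    rw [← hlX, ← hlY] at h3
    -- h3 : -((a-μY)/σ)^2/2 + lX < -((a-μX)/σ)^2/2 + lY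
    have h4 : ((a - μY)/σ)^2/2 - ((a - μX)/σ)^2/2 = (μX - μY)*(2*a - μX - μY)/(2*σ^2) := by
      field_simp
      ring
    have h5 : lX - lY < (μX - μY)*(2*a - μX - μY)/(2*σ^2) := by linarith
    rw [lt_div_iff₀ hσ2] at h5
    calc 2*σ^2*(lX - lY) = (lX - lY)*(2*σ^2) := by ring
      _ < (μX - μY) * (2*a - μX - μY) := h5
  -- bound at b
  have hlb : (μX - μY) * (2*b - μX - μY) < 2*σ^2*(lX - lY) := by
    have h1 := key_right μX μY σ a b hμ hσ hab
    have h2 : stdNormalPDF ((b - μX)/σ) * (stdNormalCDF ((b - μY)/σ) - stdNormalCDF ((a - μY)/σ))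
        < stdNormalPDF ((b - μY)/σ) * (stdNormalCDF ((b - μX)/σ) - stdNormalCDF ((a - μX)/σ)) := by
      rw [hDXe, hDYe]
      calc stdNormalPDF ((b - μX)/σ) * ((1/σ) * ∫ t in a..b, stdNormalPDF ((t - μY)/σ))
          = (1/σ) * (stdNormalPDF ((b - μX)/σ) * ∫ t in a..b, stdNormalPDF ((t - μY)/σ)) := by
            ring
        _ < (1/σ) * (stdNormalPDF ((b - μY)/σ) * ∫ t in a..b, stdNormalPDF ((t - μX)/σ)) :=
            mul_lt_mul_of_pos_left h1 (by positivity)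
        _ = stdNormalPDF ((b - μY)/σ) * ((1/σ) * ∫ t in a..b, stdNormalPDF ((t - μX)/σ)) := by
            ring
    have h3 := log_bound hDY hDX h2
    rw [← hlX, ← hlY] at h3
    -- h3 : -((b-μX)/σ)^2/2 + lY < -((b-μY)/σ)^2/2 + lX
    have h4 : ((b - μY)/σ)^2/2 - ((b - μX)/σ)^2/2 = (μX - μY)*(2*b - μX - μY)/(2*σ^2) := by
      field_simp
      ring
    have h5 : (μX - μY)*(2*b - μX - μY)/(2*σ^2) < lX - lY := by linarith
    rw [div_lt_iff₀ hσ2] at h5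
    calc (μX - μY) * (2*b - μX - μY) = (μX - μY)*(2*b - μX - μY) := by ring
      _ < (lX - lY) * (2*σ^2) := by linarith [h5]
      _ = 2*σ^2*(lX - lY) := by ring
  -- the unique solution
  set x₀ : ℝ := ((2*σ^2*(lX - lY))/(μX - μY) + μX + μY)/2 with hx₀def
  have hx₀ : (μX - μY) * (2*x₀ - μX - μY) = 2*σ^2*(lX - lY) := by
    rw [hx₀def]
    field_simp
    ring
  have hax₀ : a < x₀ := by nlinarith [hla, hx₀]
  have hx₀b : x₀ < b := by nlinarith [hlb, hx₀]
  refine ⟨x₀, ⟨⟨hax₀, hx₀b⟩, (hEquiv x₀ ⟨hax₀, hx₀b⟩).2 hx₀⟩, ?_⟩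
  rintro y ⟨hy, heq⟩
  have h6 := (hEquiv y hy).1 heq
  have h7 : (μX - μY) * (2*y - μX - μY) = (μX - μY) * (2*x₀ - μX - μY) := by
    rw [h6, hx₀]
  have h8 := mul_left_cancel₀ hμne h7
  linarith
end

section
/- Let X ~ N(μX, σ²) and Y ~ N(μY, σ²) be real-valued Gaussian random variables with σ > 0 and μX < μY, and let a < b be real numbers. Then the conditional expectations satisfy E[X | a < X < b] < E[Y | a < Y < b]. -/
open MeasureTheory ProbabilityTheory Set Real
open scoped NNReal ENNReal


lemma ioo_integrable {a b : ℝ} (h : ℝ → ℝ) (hh : Continuous h) :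
    IntegrableOn h (Set.Ioo a b) volume :=
  (hh.continuousOn.integrableOn_compact isCompact_Icc).mono_set Set.Ioo_subset_Icc_self

lemma diag_null : (volume : Measure (ℝ × ℝ)) {p : ℝ × ℝ | p.1 = p.2} = 0 := by
  rw [Measure.volume_eq_prod, Measure.prod_apply]
  · have : ∀ x : ℝ, (volume ((Prod.mk x ⁻¹' {p : ℝ × ℝ | p.1 = p.2}) : Set ℝ)) = 0 := by
      intro x
      have : (Prod.mk x ⁻¹' {p : ℝ × ℝ | p.1 = p.2} : Set ℝ) = {x} := by
        ext y; simp [eq_comm]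
      rw [this]; simp
    simp [this]
  · exact measurableSet_eq_fun measurable_fst measurable_snd

lemma key {a b : ℝ} (hab : a < b) (f g : ℝ → ℝ)
    (hf : Continuous f) (hg : Continuous g)
    (hfpos : ∀ x, 0 < f x) (hgmono : StrictMono g) :
    (∫ x in Set.Ioo a b, f x * x) * (∫ x in Set.Ioo a b, f x * g x) <
      (∫ x in Set.Ioo a b, f x * g x * x) * (∫ x in Set.Ioo a b, f x) := by
  set s := Set.Ioo a b with hs
  set F : ℝ × ℝ → ℝ := fun p => (p.1 - p.2) * (f p.1 * f p.2 * (g p.1 - g p.2)) with hF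
  have hFc : Continuous F := by fun_prop
  have hFnn : ∀ p : ℝ × ℝ, 0 ≤ F p := by
    intro ⟨x, y⟩
    have h1 : 0 ≤ (x - y) * (g x - g y) := by
      rcases le_total x y with h | h
      · have h2 : g x ≤ g y := hgmono.monotone h
        nlinarith
      · have h2 : g y ≤ g x := hgmono.monotone h
        nlinarith
    have := mul_nonneg h1 (mul_nonneg (hfpos x).le (hfpos y).le)
    simp only [hF]; nlinarith
  have hFint : IntegrableOn F (s ×ˢ s) volume :=
    (hFc.continuousOn.integrableOn_compact (isCompact_Icc.prod isCompact_Icc)).mono_set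
      (Set.prod_mono Set.Ioo_subset_Icc_self Set.Ioo_subset_Icc_self)
  -- positivity of I
  have hIpos : 0 < ∫ p in s ×ˢ s, F p := by
    rw [setIntegral_pos_iff_support_of_nonneg_ae (Filter.Eventually.of_forall hFnn) hFint]
    have hsub : (s ×ˢ s) \ {p : ℝ × ℝ | p.1 = p.2} ⊆ Function.support F ∩ (s ×ˢ s) := by
      rintro ⟨x, y⟩ ⟨hmem, hne⟩
      refine ⟨?_, hmem⟩
      have hxy : x ≠ y := hne
      have hFval : F (x, y) = ((x - y) * (g x - g y)) * (f x * f y) := by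
        simp only [hF]; ring
      have hpos : 0 < F (x, y) := by
        rw [hFval]
        refine mul_pos ?_ (mul_pos (hfpos x) (hfpos y))
        rcases lt_or_gt_of_ne hxy with h | h
        · have h2 := hgmono h
          exact mul_pos_of_neg_of_neg (by linarith) (by linarith)
        · have h2 := hgmono h
          exact mul_pos (by linarith) (by linarith)
      exact Function.mem_support.2 hpos.ne' 
    refine lt_of_lt_of_le ?_ (measure_mono hsub)
    rw [measure_diff_null diag_null, Measure.volume_eq_prod, Measure.prod_prod, hs,
      Real.volume_Ioo]
    have h0 : 0 < ENNReal.ofReal (b - a) := ENNReal.ofReal_pos.2 (by linarith)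
    exact ENNReal.mul_pos h0.ne' h0.ne'
  -- expand I
  have hint1 : IntegrableOn (fun x => f x * x) s volume := ioo_integrable _ (by fun_prop)
  have hint2 : IntegrableOn f s volume := ioo_integrable _ hf
  have hint3 : IntegrableOn (fun x => f x * g x) s volume := ioo_integrable _ (by fun_prop)
  have hint4 : IntegrableOn (fun x => f x * g x * x) s volume := ioo_integrable _ (by fun_prop)
  have hexp : ∫ p in s ×ˢ s, F p =
      2 * ((∫ x in s, f x * g x * x) * (∫ x in s, f x) -
        (∫ x in s, f x * x) * (∫ x in s, f x * g x)) := by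
    have hre : (volume : Measure (ℝ × ℝ)).restrict (s ×ˢ s)
        = (volume.restrict s).prod (volume.restrict s) := by
      rw [Measure.volume_eq_prod, Measure.prod_restrict]
    have hFeq : ∀ p : ℝ × ℝ, F p =
        (f p.1 * g p.1 * p.1) * f p.2 - (f p.1 * p.1) * (f p.2 * g p.2)
          - (f p.1 * g p.1) * (f p.2 * p.2) + f p.1 * (f p.2 * g p.2 * p.2) := by
      intro p; simp only [hF]; ring
    calc ∫ p in s ×ˢ s, F p
        = ∫ p, ((f p.1 * g p.1 * p.1) * f p.2 - (f p.1 * p.1) * (f p.2 * g p.2)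
          - (f p.1 * g p.1) * (f p.2 * p.2) + f p.1 * (f p.2 * g p.2 * p.2))
            ∂((volume.restrict s).prod (volume.restrict s)) := by
          rw [← hre]; exact integral_congr_ae (Filter.Eventually.of_forall hFeq)
      _ = 2 * ((∫ x in s, f x * g x * x) * (∫ x in s, f x) -
          (∫ x in s, f x * x) * (∫ x in s, f x * g x)) := by
          rw [integral_add, integral_sub, integral_sub]
          · have e1 : ∫ p : ℝ × ℝ, (f p.1 * g p.1 * p.1) * f p.2
                ∂((volume.restrict s).prod (volume.restrict s))
                = (∫ x in s, f x * g x * x) * (∫ x in s, f x) :=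
              integral_prod_mul (fun x => f x * g x * x) (fun x => f x)
            have e2 : ∫ p : ℝ × ℝ, (f p.1 * p.1) * (f p.2 * g p.2)
                ∂((volume.restrict s).prod (volume.restrict s))
                = (∫ x in s, f x * x) * (∫ x in s, f x * g x) :=
              integral_prod_mul (fun x => f x * x) (fun x => f x * g x)
            have e3 : ∫ p : ℝ × ℝ, (f p.1 * g p.1) * (f p.2 * p.2)
                ∂((volume.restrict s).prod (volume.restrict s))
                = (∫ x in s, f x * g x) * (∫ x in s, f x * x) :=
              integral_prod_mul (fun x => f x * g x) (fun x => f x * x)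
            have e4 : ∫ p : ℝ × ℝ, f p.1 * (f p.2 * g p.2 * p.2)
                ∂((volume.restrict s).prod (volume.restrict s))
                = (∫ x in s, f x) * (∫ x in s, f x * g x * x) :=
              integral_prod_mul (fun x => f x) (fun x => f x * g x * x)
            rw [e1, e2, e3, e4]
            ring
          · exact hint4.mul_prod hint2
          · exact hint1.mul_prod hint3
          · exact (hint4.mul_prod hint2).sub (hint1.mul_prod hint3)
          · exact hint3.mul_prod hint1
          · exact ((hint4.mul_prod hint2).sub (hint1.mul_prod hint3)).sub
              (hint3.mul_prod hint1)
          · exact hint2.mul_prod hint4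

  rw [hexp] at hIpos
  linarith

lemma pdf_ratio (μX μY : ℝ) {σ : ℝ} (hσ : 0 < σ) (x : ℝ) :
    gaussianPDFReal μY (σ^2).toNNReal x =
      gaussianPDFReal μX (σ^2).toNNReal x *
        Real.exp ((μY - μX) / σ^2 * x + (μX^2 - μY^2) / (2 * σ^2)) := by
  have hv : (((σ^2).toNNReal : ℝ≥0) : ℝ) = σ^2 := Real.coe_toNNReal _ (sq_nonneg σ)
  have hσ2 : σ^2 ≠ 0 := by positivity
  simp only [gaussianPDFReal, hv, mul_assoc, ← Real.exp_add]
  congr 1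
  field_simp
  ring

lemma trunc_mean {Ω : Type*} [MeasurableSpace Ω] (P : Measure Ω) [IsProbabilityMeasure P]
    (X : Ω → ℝ) (hX : Measurable X) (μ0 σ a b : ℝ) (hσ : 0 < σ)
    (hXd : Measure.map X P = gaussianReal μ0 (σ^2).toNNReal) :
    ∫ ω, X ω ∂(ProbabilityTheory.cond P {ω | a < X ω ∧ X ω < b}) =
      (∫ x in Set.Ioo a b, gaussianPDFReal μ0 (σ^2).toNNReal x)⁻¹ *
        ∫ x in Set.Ioo a b, gaussianPDFReal μ0 (σ^2).toNNReal x * x := by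
  have hv : (σ^2).toNNReal ≠ 0 := by
    simp only [ne_eq, Real.toNNReal_eq_zero, not_le]
    positivity
  have hAset : {ω | a < X ω ∧ X ω < b} = X ⁻¹' Set.Ioo a b := rfl
  have hPA : P (X ⁻¹' Set.Ioo a b)
      = ENNReal.ofReal (∫ x in Set.Ioo a b, gaussianPDFReal μ0 (σ^2).toNNReal x) := by
    rw [← Measure.map_apply hX measurableSet_Ioo, hXd,
      gaussianReal_apply_eq_integral _ hv]
  have hset : ∫ ω in X ⁻¹' Set.Ioo a b, X ω ∂P
      = ∫ x in Set.Ioo a b, gaussianPDFReal μ0 (σ^2).toNNReal x * x := by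
    have h1 : ∫ x in Set.Ioo a b, x ∂(Measure.map X P)
        = ∫ ω in X ⁻¹' Set.Ioo a b, X ω ∂P :=
      setIntegral_map measurableSet_Ioo aestronglyMeasurable_id hX.aemeasurable
    rw [← h1, hXd, gaussianReal_of_var_ne_zero _ hv]
    have hwd : volume.withDensity (gaussianPDF μ0 (σ^2).toNNReal)
        = volume.withDensity
          (fun x => ((gaussianPDFReal μ0 (σ^2).toNNReal x).toNNReal : ℝ≥0∞)) := rfl
    rw [hwd, setIntegral_withDensity_eq_setIntegral_smul
      ((measurable_gaussianPDFReal _ _).real_toNNReal) _ measurableSet_Ioo]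
    refine integral_congr_ae (Filter.Eventually.of_forall fun x => ?_)
    simp [NNReal.smul_def, Real.coe_toNNReal _ (gaussianPDFReal_nonneg _ _ _)]
  rw [ProbabilityTheory.cond, integral_smul_measure, hAset, hPA, hset,
    ENNReal.toReal_inv, ENNReal.toReal_ofReal
      (integral_nonneg fun x => gaussianPDFReal_nonneg _ _ _), smul_eq_mul]

/-- For Gaussian random variables `X ~ N(μX, σ²)` and `Y ~ N(μY, σ²)` with equal
variances and `μX < μY`, and `a < b`, the conditional expectations satisfy
`E[X | a < X < b] < E[Y | a < Y < b]`. -/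
theorem cond_exp_lt_of_gaussian
    {Ω : Type*} [MeasurableSpace Ω] (P : Measure Ω) [IsProbabilityMeasure P]
    (X Y : Ω → ℝ) (hX : Measurable X) (hY : Measurable Y)
    (μX μY σ a b : ℝ) (hσ : 0 < σ) (hμ : μX < μY) (hab : a < b)
    (hXd : Measure.map X P = gaussianReal μX (σ ^ 2).toNNReal)
    (hYd : Measure.map Y P = gaussianReal μY (σ ^ 2).toNNReal)
    (hXpos : P {ω | a < X ω ∧ X ω < b} ≠ 0)
    (hYpos : P {ω | a < Y ω ∧ Y ω < b} ≠ 0) :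
    ∫ ω, X ω ∂(ProbabilityTheory.cond P {ω | a < X ω ∧ X ω < b}) <
      ∫ ω, Y ω ∂(ProbabilityTheory.cond P {ω | a < Y ω ∧ Y ω < b}) := by
  have hv : (σ ^ 2).toNNReal ≠ 0 := by
    simp only [ne_eq, Real.toNNReal_eq_zero, not_le]
    positivity
  set f : ℝ → ℝ := gaussianPDFReal μX (σ ^ 2).toNNReal with hfdef
  set g : ℝ → ℝ := fun x =>
    Real.exp ((μY - μX) / σ ^ 2 * x + (μX ^ 2 - μY ^ 2) / (2 * σ ^ 2)) with hgdef
  have hratio : ∀ x, gaussianPDFReal μY (σ ^ 2).toNNReal x = f x * g x :=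
    fun x => pdf_ratio μX μY hσ x
  -- continuity
  have hfc : Continuous f := by
    rw [hfdef, gaussianPDFReal_def]
    fun_prop
  have hgc : Continuous g := by rw [hgdef]; fun_prop
  have hfpos : ∀ x, 0 < f x := fun x => gaussianPDFReal_pos _ _ _ hv
  have hgmono : StrictMono g := by
    intro x y h
    rw [hgdef]
    have hc : 0 < (μY - μX) / σ ^ 2 := div_pos (by linarith) (by positivity)
    apply Real.exp_lt_exp.2
    have := mul_lt_mul_of_pos_left h hc
    linarith
  -- conditional expectations
  have hEX := trunc_mean P X hX μX σ a b hσ hXd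
  have hEY := trunc_mean P Y hY μY σ a b hσ hYd
  -- rewrite Y integrals
  have hB2 : ∫ x in Set.Ioo a b, gaussianPDFReal μY (σ ^ 2).toNNReal x
      = ∫ x in Set.Ioo a b, f x * g x :=
    integral_congr_ae (Filter.Eventually.of_forall fun x => hratio x)
  have hA2 : ∫ x in Set.Ioo a b, gaussianPDFReal μY (σ ^ 2).toNNReal x * x
      = ∫ x in Set.Ioo a b, f x * g x * x :=
    integral_congr_ae (Filter.Eventually.of_forall fun x => congrArg (· * x) (hratio x))
  -- positivity of denominators
  have hPB1 : P {ω | a < X ω ∧ X ω < b}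
      = ENNReal.ofReal (∫ x in Set.Ioo a b, f x) := by
    have : {ω | a < X ω ∧ X ω < b} = X ⁻¹' Set.Ioo a b := rfl
    rw [this, ← Measure.map_apply hX measurableSet_Ioo, hXd,
      gaussianReal_apply_eq_integral _ hv]
  have hPB2 : P {ω | a < Y ω ∧ Y ω < b}
      = ENNReal.ofReal (∫ x in Set.Ioo a b, f x * g x) := by
    have h0 : {ω | a < Y ω ∧ Y ω < b} = Y ⁻¹' Set.Ioo a b := rfl
    rw [h0, ← Measure.map_apply hY measurableSet_Ioo, hYd,
      gaussianReal_apply_eq_integral _ hv, hB2]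
  have hB1pos : 0 < ∫ x in Set.Ioo a b, f x := by
    rw [hPB1] at hXpos
    by_contra h
    exact hXpos (ENNReal.ofReal_eq_zero.2 (not_lt.1 h))
  have hB2pos : 0 < ∫ x in Set.Ioo a b, f x * g x := by
    rw [hPB2] at hYpos
    by_contra h
    exact hYpos (ENNReal.ofReal_eq_zero.2 (not_lt.1 h))
  rw [hEX, hEY, hB2, hA2, inv_mul_eq_div, inv_mul_eq_div,
    div_lt_div_iff₀ hB1pos hB2pos]
  exact key hab f g hfc hgc hfpos hgmono
end

section
/- Let X₁, …, Xₙ be independent real-valued Gaussian random variables with Xᵢ ~ N(μᵢ, σ²) for a common σ > 0, and suppose μ₁ ≤ μ₂ ≤ … ≤ μₙ. Then for every permutation π of {1, …, n}, P(X₁ < X₂ < … < Xₙ) ≥ P(X_{π(1)} < X_{π(2)} < … < X_{π(n)}). That is, the most likely order of occurrence of the Xᵢ is the order in which their means are ascending. -/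
open MeasureTheory ProbabilityTheory
open scoped NNReal ENNReal

section Aux

open ENNReal

private lemma lintegral_fin_prod :
    ∀ (n : ℕ) (μ : Fin n → Measure ℝ), (∀ i, SigmaFinite (μ i)) →
    ∀ (f : Fin n → ℝ → ℝ≥0∞), (∀ i, Measurable (f i)) →
    ∫⁻ x : Fin n → ℝ, ∏ i, f i (x i) ∂(Measure.pi μ) = ∏ i, ∫⁻ t, f i t ∂(μ i)
  | 0, μ, hμ, f, hf => by
      simp [Measure.pi_of_empty]
  | (n+1), μ, hμ, f, hf => by
      haveI := hμ
      calc ∫⁻ x : Fin (n+1) → ℝ, ∏ i, f i (x i) ∂(Measure.pi μ)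
          = ∫⁻ z : ℝ × (Fin n → ℝ), f 0 z.1 * ∏ j : Fin n, f j.succ (z.2 j)
              ∂((μ 0).prod (Measure.pi fun j : Fin n => μ ((0 : Fin (n+1)).succAbove j))) := by
            rw [← ((measurePreserving_piFinSuccAbove μ 0).symm).lintegral_comp_emb
              (MeasurableEquiv.measurableEmbedding _)]
            refine lintegral_congr fun z => ?_
            simp [MeasurableEquiv.piFinSuccAbove_symm_apply, Fin.insertNthEquiv,
              Fin.insertNth_zero, Fin.prod_univ_succ, Fin.zero_succAbove]
        _ = (∫⁻ t, f 0 t ∂(μ 0)) *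
              ∏ j : Fin n, ∫⁻ t, f j.succ t ∂(μ ((0 : Fin (n+1)).succAbove j)) := by
            have h := lintegral_prod_mul (μ := μ 0)
              (ν := Measure.pi fun j : Fin n => μ ((0 : Fin (n+1)).succAbove j))
              (f := f 0) (g := fun w : Fin n → ℝ => ∏ j, f j.succ (w j))
              (hf 0).aemeasurable
              ((Finset.measurable_prod Finset.univ
                (fun j _ => (hf j.succ).comp (measurable_pi_apply j))).aemeasurable)
            rw [lintegral_fin_prod n (fun j => μ ((0 : Fin (n+1)).succAbove j))
              (fun j => hμ _) (fun j => f j.succ) (fun j => hf _)] at h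
            exact h
        _ = ∏ i, ∫⁻ t, f i t ∂(μ i) := by
            rw [Fin.prod_univ_succ]
            simp [Fin.zero_succAbove]

private lemma pi_gaussian (n : ℕ) (m : Fin n → ℝ) (v : ℝ≥0) (hv : v ≠ 0) :
    Measure.pi (fun i => gaussianReal (m i) v)
      = (Measure.pi fun _ : Fin n => (volume : Measure ℝ)).withDensity
          (fun x => ∏ i, gaussianPDF (m i) v (x i)) := by
  refine Measure.pi_eq fun s hs => ?_
  rw [withDensity_apply _ (MeasurableSet.univ_pi hs),
      ← lintegral_indicator (MeasurableSet.univ_pi hs) _]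
  have hind : (Set.univ.pi s).indicator (fun x => ∏ i, gaussianPDF (m i) v (x i))
      = fun x => ∏ i, (s i).indicator (gaussianPDF (m i) v) (x i) := by
    funext x
    by_cases hx : x ∈ Set.univ.pi s
    · rw [Set.indicator_of_mem hx]
      exact Finset.prod_congr rfl fun i _ =>
        (Set.indicator_of_mem (hx i (Set.mem_univ i)) _).symm
    · rw [Set.indicator_of_notMem hx]
      rw [Set.mem_univ_pi] at hx
      push_neg at hx
      obtain ⟨i, hi⟩ := hx
      exact (Finset.prod_eq_zero (Finset.mem_univ i)
        (Set.indicator_of_notMem hi _)).symm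
  rw [hind, lintegral_fin_prod n _ (fun _ => inferInstance) _
    (fun i => (measurable_gaussianPDF _ _).indicator (hs i))]
  refine Finset.prod_congr rfl fun i _ => ?_
  rw [lintegral_indicator (hs i) _, gaussianReal_apply _ hv]

end Aux

/-- For jointly independent Gaussian random variables `X i ~ N(μ i, σ²)` with common
variance `σ² > 0` and means in ascending order, the most likely order of occurrence is
the index order: for every permutation `π`,
`P(X 0 < X 1 < … < X (n−1)) ≥ P(X (π 0) < X (π 1) < … < X (π (n−1)))`. -/
theorem most_likely_order_is_mean_ascending
    {Ω : Type*} [MeasurableSpace Ω] (P : Measure Ω) [IsProbabilityMeasure P]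
    (n : ℕ) (X : Fin n → Ω → ℝ) (hX : ∀ i, Measurable (X i))
    (μ : Fin n → ℝ) (σ : ℝ) (hσ : 0 < σ)
    (hXd : ∀ i, Measure.map (X i) P = gaussianReal (μ i) ((σ ^ 2).toNNReal))
    (hindep : iIndepFun X P)
    (hμ : Monotone μ) :
    ∀ π : Equiv.Perm (Fin n),
      P {ω | StrictMono fun i => X i ω} ≥ P {ω | StrictMono fun i => X (π i) ω} := by
  intro π
  set v : ℝ≥0 := (σ ^ 2).toNNReal with hv_def
  have hvpos : 0 < v := Real.toNNReal_pos.mpr (by positivity)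
  have hv : v ≠ 0 := hvpos.ne'
  have hvR : (0 : ℝ) < (v : ℝ) := hvpos
  have hYm : Measurable (fun ω => fun i => X i ω) := measurable_pi_lambda _ hX
  -- the joint law is the product of the marginals
  have hmap : Measure.map (fun ω i => X i ω) P
      = Measure.pi (fun i => gaussianReal (μ i) v) := by
    refine (Measure.pi_eq fun s hs => ?_).symm
    rw [Measure.map_apply hYm (MeasurableSet.univ_pi hs)]
    have hpre : (fun ω i => X i ω) ⁻¹' Set.univ.pi s = ⋂ i, X i ⁻¹' s i := by
      ext ω; simp [Set.mem_univ_pi]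
    rw [hpre, hindep.meas_iInter (fun i => ⟨s i, hs i, rfl⟩)]
    exact Finset.prod_congr rfl fun i _ => by
      rw [← Measure.map_apply (hX i) (hs i), hXd i]
  -- the ordering sets are measurable
  have hSM : ∀ τ : Equiv.Perm (Fin n),
      MeasurableSet {x : Fin n → ℝ | StrictMono fun i => x (τ i)} := by
    intro τ
    have h : {x : Fin n → ℝ | StrictMono fun i => x (τ i)}
        = ⋂ (i : Fin n) (j : Fin n) (_ : i < j), {x | x (τ i) < x (τ j)} := by
      ext x
      simp only [Set.mem_setOf_eq, Set.mem_iInter]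
      exact ⟨fun h i j hij => h hij, fun h i j hij => h i j hij⟩
    rw [h]
    exact MeasurableSet.iInter fun i => MeasurableSet.iInter fun j =>
      MeasurableSet.iInter fun _ =>
        measurableSet_lt (measurable_pi_apply _) (measurable_pi_apply _)
  have hSM1 : MeasurableSet {x : Fin n → ℝ | StrictMono x} := by
    simpa using hSM (Equiv.refl (Fin n))
  -- express each ordering probability as an integral over the fixed set {StrictMono}
  have key : ∀ τ : Equiv.Perm (Fin n),
      P {ω | StrictMono fun i => X (τ i) ω}
        = ∫⁻ x in {x : Fin n → ℝ | StrictMono x},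
            ∏ i, gaussianPDF (μ (τ i)) v (x i)
            ∂(Measure.pi fun _ : Fin n => (volume : Measure ℝ)) := by
    intro τ
    have h1 : {ω | StrictMono fun i => X (τ i) ω}
        = (fun ω i => X i ω) ⁻¹' {x : Fin n → ℝ | StrictMono fun i => x (τ i)} := rfl
    rw [h1, ← Measure.map_apply hYm (hSM τ), hmap, pi_gaussian n μ v hv,
        withDensity_apply _ (hSM τ)]
    -- change of variables by the permutation of coordinates
    set T : (Fin n → ℝ) ≃ᵐ (Fin n → ℝ) :=
      MeasurableEquiv.piCongrLeft (fun _ : Fin n => ℝ) τ with hT_def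
    have hP : MeasurePreserving T (Measure.pi fun _ : Fin n => (volume : Measure ℝ))
        (Measure.pi fun _ : Fin n => (volume : Measure ℝ)) :=
      measurePreserving_piCongrLeft (fun _ : Fin n => (volume : Measure ℝ)) τ
    have hTy : ∀ (y : Fin n → ℝ) (j : Fin n), T y j = y (τ.symm j) := by
      intro y j
      have h := MeasurableEquiv.piCongrLeft_apply_apply τ (β := fun _ => ℝ) y (τ.symm j)
      rwa [Equiv.apply_symm_apply] at h
    have hg : Measurable (fun x : Fin n → ℝ => ∏ i, gaussianPDF (μ i) v (x i)) :=
      Finset.measurable_prod Finset.univ fun i _ =>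
        (measurable_gaussianPDF _ _).comp (measurable_pi_apply i)
    have e1 : T ⁻¹' {x : Fin n → ℝ | StrictMono fun i => x (τ i)}
        = {x : Fin n → ℝ | StrictMono x} := by
      ext y
      simp only [Set.mem_preimage, Set.mem_setOf_eq]
      have : (fun i => T y (τ i)) = y := funext fun i => by
        rw [hTy, Equiv.symm_apply_apply]
      rw [this]
    have e2 : ∀ y : Fin n → ℝ,
        (∏ i, gaussianPDF (μ i) v (T y i)) = ∏ i, gaussianPDF (μ (τ i)) v (y i) := by
      intro y
      refine (Fintype.prod_equiv τ (fun i => gaussianPDF (μ (τ i)) v (y i))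
        (fun j => gaussianPDF (μ j) v (T y j)) (fun i => ?_)).symm
      simp only [hTy, Equiv.symm_apply_apply]
    calc ∫⁻ x in {x : Fin n → ℝ | StrictMono fun i => x (τ i)},
            ∏ i, gaussianPDF (μ i) v (x i)
            ∂(Measure.pi fun _ : Fin n => (volume : Measure ℝ))
        = ∫⁻ y in T ⁻¹' {x : Fin n → ℝ | StrictMono fun i => x (τ i)},
            ∏ i, gaussianPDF (μ i) v (T y i)
            ∂(Measure.pi fun _ : Fin n => (volume : Measure ℝ)) :=
          (hP.setLIntegral_comp_preimage (hSM τ) hg).symm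
      _ = ∫⁻ y in {x : Fin n → ℝ | StrictMono x},
            ∏ i, gaussianPDF (μ (τ i)) v (y i)
            ∂(Measure.pi fun _ : Fin n => (volume : Measure ℝ)) := by
          rw [e1]; exact lintegral_congr e2
  -- the pointwise density comparison by the rearrangement inequality
  have hcmp : ∀ y ∈ {x : Fin n → ℝ | StrictMono x},
      (∏ i, gaussianPDF (μ (π i)) v (y i)) ≤ ∏ i, gaussianPDF (μ i) v (y i) := by
    intro y hy
    have hy' : StrictMono y := hy
    simp only [gaussianPDF]
    rw [← ENNReal.ofReal_prod_of_nonneg (fun i _ => gaussianPDFReal_nonneg _ _ _),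
        ← ENNReal.ofReal_prod_of_nonneg (fun i _ => gaussianPDFReal_nonneg _ _ _)]
    refine ENNReal.ofReal_le_ofReal ?_
    simp only [gaussianPDFReal]
    rw [Finset.prod_mul_distrib, Finset.prod_mul_distrib, ← Real.exp_sum, ← Real.exp_sum]
    refine mul_le_mul_of_nonneg_left ?_ (by positivity)
    refine Real.exp_le_exp.mpr ?_
    -- reduce to the sum of squares inequality
    have hmono : Monovary y μ := by
      intro i j hij
      rcases lt_or_ge i j with h | h
      · exact (hy' h).le
      · exact absurd (hμ h) (not_le.mpr hij)
    have h2 : ∑ i, y i * μ (π i) ≤ ∑ i, y i * μ i :=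
      hmono.sum_mul_comp_perm_le_sum_mul
    have h1 : ∑ i, μ (π i) ^ 2 = ∑ i, μ i ^ 2 := Equiv.sum_comp π (fun i => μ i ^ 2)
    have expand : ∀ m : Fin n → ℝ,
        ∑ i, (y i - m i) ^ 2
          = ∑ i, y i ^ 2 - 2 * ∑ i, y i * m i + ∑ i, m i ^ 2 := by
      intro m
      have hterm : ∀ i, (y i - m i) ^ 2 = y i ^ 2 - 2 * (y i * m i) + m i ^ 2 :=
        fun i => by ring
      rw [Finset.sum_congr rfl fun i _ => hterm i, Finset.sum_add_distrib,
        Finset.sum_sub_distrib, ← Finset.mul_sum]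
    have hcentral : ∑ i, (y i - μ i) ^ 2 ≤ ∑ i, (y i - μ (π i)) ^ 2 := by
      have eA := expand μ
      have eB : ∑ i, (y i - μ (π i)) ^ 2
          = ∑ i, y i ^ 2 - 2 * ∑ i, y i * μ (π i) + ∑ i, μ (π i) ^ 2 :=
        expand (fun i => μ (π i))
      rw [eA, eB]
      linarith
    rw [← Finset.sum_div, ← Finset.sum_div, Finset.sum_neg_distrib, Finset.sum_neg_distrib]
    have h2v : (0 : ℝ) < 2 * (v : ℝ) := by linarith
    exact div_le_div_of_nonneg_right (neg_le_neg hcentral) h2v.le |>.trans_eq rfl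
  -- put everything together
  have hid := key 1
  simp only [Equiv.Perm.one_apply] at hid
  rw [ge_iff_le, key π, hid]
  exact setLIntegral_mono
    (Finset.measurable_prod Finset.univ fun i _ =>
      (measurable_gaussianPDF _ _).comp (measurable_pi_apply i)) hcmp
end

section
/- Let X₁, …, Xₙ be independent real-valued Gaussian random variables with Xᵢ ~ N(μᵢ, σ²) for a common σ > 0, and let 1 ≤ k < n be such that μₖ > μ_{k+1}. Then swapping the positions of Xₖ and X_{k+1} in the ordering does not decrease its probability: P(X₁ < … < X_{k−1} < Xₖ < X_{k+1} < X_{k+2} < … < Xₙ) ≤ P(X₁ < … < X_{k−1} < X_{k+1} < Xₖ < X_{k+2} < … < Xₙ). -/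
open MeasureTheory ProbabilityTheory Real
open scoped ENNReal NNReal

namespace SwapNeighboursAux

/-- Tonelli for a finite product of functions of single coordinates, `lintegral` version. -/
lemma lintegral_pi_prod {n : ℕ} (f : Fin n → ℝ → ℝ≥0∞) (hf : ∀ i, Measurable (f i)) :
    ∫⁻ x : Fin n → ℝ, ∏ i, f i (x i) ∂(Measure.pi fun _ => (volume : Measure ℝ))
      = ∏ i, ∫⁻ y, f i y := by
  induction n with
  | zero =>
    simp [Measure.pi_of_empty (fun _ : Fin 0 => (volume : Measure ℝ))]
  | succ n ih =>
    have hmeas : Measurable fun x : Fin (n + 1) → ℝ => ∏ i, f i (x i) :=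
      Finset.measurable_prod _ fun i _ => (hf i).comp (measurable_pi_apply i)
    have h := (measurePreserving_piFinSuccAbove (fun _ : Fin (n + 1) => (volume : Measure ℝ)) 0).symm
    rw [← h.lintegral_comp hmeas]
    simp_rw [MeasurableEquiv.piFinSuccAbove_symm_apply, Fin.insertNthEquiv,
      Fin.prod_univ_succ, Fin.insertNth_zero, Equiv.coe_fn_mk]
    simp only [Fin.zero_succAbove, cast_eq, Fin.cons_zero, Fin.cons_succ]
    have hg2 : Measurable fun y : Fin n → ℝ => ∏ i, f i.succ (y i) :=
      Finset.measurable_prod _ fun i _ => (hf i.succ).comp (measurable_pi_apply i)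
    exact (lintegral_prod_mul (hf 0).aemeasurable hg2.aemeasurable).trans
      (by rw [ih (fun i => f i.succ) fun i => hf i.succ])

/-- The product of gaussian measures is the gaussian density product against Lebesgue. -/
lemma pi_gaussian_eq {n : ℕ} (μ : Fin n → ℝ) {v : ℝ≥0} (hv : v ≠ 0) :
    Measure.pi (fun i => gaussianReal (μ i) v)
      = (Measure.pi fun _ : Fin n => (volume : Measure ℝ)).withDensity
          (fun x => ∏ i, gaussianPDF (μ i) v (x i)) := by
  refine Measure.pi_eq fun s hs => ?_
  rw [withDensity_apply _ (MeasurableSet.univ_pi hs),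
    ← lintegral_indicator (MeasurableSet.univ_pi hs) _]
  have hind : ∀ x : Fin n → ℝ,
      (Set.pi Set.univ s).indicator (fun x => ∏ i, gaussianPDF (μ i) v (x i)) x
        = ∏ i, (s i).indicator (gaussianPDF (μ i) v) (x i) := by
    intro x
    by_cases hx : x ∈ Set.pi Set.univ s
    · rw [Set.indicator_of_mem hx]
      exact Finset.prod_congr rfl fun i _ =>
        (Set.indicator_of_mem (hx i (Set.mem_univ i)) _).symm
    · rw [Set.indicator_of_notMem hx]
      rw [Set.mem_univ_pi] at hx
      push_neg at hx
      obtain ⟨i, hi⟩ := hx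
      exact (Finset.prod_eq_zero (Finset.mem_univ i)
        (Set.indicator_of_notMem hi _)).symm
  simp_rw [hind]
  rw [lintegral_pi_prod _ (fun i => (measurable_gaussianPDF _ _).indicator (hs i))]
  refine Finset.prod_congr rfl fun i _ => ?_
  rw [lintegral_indicator (hs i) _, ← gaussianReal_apply _ hv]

/-- The joint law of independent random variables is the product of the laws. -/
lemma joint_eq_pi {Ω : Type*} [MeasurableSpace Ω] (P : Measure Ω) [IsProbabilityMeasure P]
    {n : ℕ} (X : Fin n → Ω → ℝ) (hX : ∀ i, Measurable (X i))
    (hindep : iIndepFun X P) :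
    Measure.map (fun ω i => X i ω) P = Measure.pi (fun i => Measure.map (X i) P) := by
  have : ∀ i, IsProbabilityMeasure (Measure.map (X i) P) :=
    fun i => Measure.isProbabilityMeasure_map (hX i).aemeasurable
  refine (Measure.pi_eq fun s hs => ?_).symm
  rw [Measure.map_apply (measurable_pi_lambda _ hX) (MeasurableSet.univ_pi hs)]
  have hpre : (fun ω i => X i ω) ⁻¹' Set.pi Set.univ s
      = ⋂ i ∈ Finset.univ, X i ⁻¹' s i := by
    ext ω
    simp [Set.mem_pi]
  rw [hpre, hindep.measure_inter_preimage_eq_mul Finset.univ (fun i _ => hs i)]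
  exact Finset.prod_congr rfl fun i _ => (Measure.map_apply (hX i) (hs i)).symm

/-- Real version of the key density rearrangement inequality. -/
lemma gaussianPDFReal_mul_le {v : ℝ≥0} (hv : v ≠ 0) {a b y z : ℝ} (hab : b ≤ a) (hyz : y ≤ z) :
    gaussianPDFReal a v y * gaussianPDFReal b v z
      ≤ gaussianPDFReal a v z * gaussianPDFReal b v y := by
  have hv' : (0 : ℝ) < 2 * (v : ℝ) := by
    have : (0 : ℝ) < (v : ℝ) := by exact_mod_cast pos_iff_ne_zero.mpr hv
    linarith
  unfold gaussianPDFReal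
  set C := (√(2 * π * (v : ℝ)))⁻¹ with hC
  have hC0 : 0 ≤ C := inv_nonneg.2 (Real.sqrt_nonneg _)
  have key : rexp (-(y - a) ^ 2 / (2 * v)) * rexp (-(z - b) ^ 2 / (2 * v))
      ≤ rexp (-(z - a) ^ 2 / (2 * v)) * rexp (-(y - b) ^ 2 / (2 * v)) := by
    rw [← Real.exp_add, ← Real.exp_add]
    apply Real.exp_le_exp.2
    rw [← add_div, ← add_div]
    rw [div_eq_mul_inv, div_eq_mul_inv]
    exact mul_le_mul_of_nonneg_right
      (by nlinarith [mul_nonneg (sub_nonneg.2 hyz) (sub_nonneg.2 hab)])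
      (inv_nonneg.2 hv'.le)
  calc C * rexp (-(y - a) ^ 2 / (2 * v)) * (C * rexp (-(z - b) ^ 2 / (2 * v)))
      = C * C * (rexp (-(y - a) ^ 2 / (2 * v)) * rexp (-(z - b) ^ 2 / (2 * v))) := by ring
    _ ≤ C * C * (rexp (-(z - a) ^ 2 / (2 * v)) * rexp (-(y - b) ^ 2 / (2 * v))) :=
        mul_le_mul_of_nonneg_left key (mul_nonneg hC0 hC0)
    _ = C * rexp (-(z - a) ^ 2 / (2 * v)) * (C * rexp (-(y - b) ^ 2 / (2 * v))) := by ring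

/-- ENNReal version of the key density rearrangement inequality. -/
lemma gaussianPDF_mul_le {v : ℝ≥0} (hv : v ≠ 0) {a b y z : ℝ} (hab : b ≤ a) (hyz : y ≤ z) :
    gaussianPDF a v y * gaussianPDF b v z ≤ gaussianPDF a v z * gaussianPDF b v y := by
  rw [gaussianPDF, gaussianPDF, gaussianPDF, gaussianPDF,
    ← ENNReal.ofReal_mul (gaussianPDFReal_nonneg _ _ _),
    ← ENNReal.ofReal_mul (gaussianPDFReal_nonneg _ _ _)]
  exact ENNReal.ofReal_le_ofReal (gaussianPDFReal_mul_le hv hab hyz)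

/-- Comparing two products differing only in two factors. -/
lemma prod_le_of_pair {ι : Type*} [Fintype ι] [DecidableEq ι] (p q : ι → ℝ≥0∞)
    (i₀ i₁ : ι) (hne : i₀ ≠ i₁) (hoff : ∀ i, i ≠ i₀ → i ≠ i₁ → q i = p i)
    (hpair : q i₀ * q i₁ ≤ p i₀ * p i₁) :
    ∏ i, q i ≤ ∏ i, p i := by
  rw [← Finset.mul_prod_erase Finset.univ q (Finset.mem_univ i₀),
    ← Finset.mul_prod_erase _ q (Finset.mem_erase.2 ⟨hne.symm, Finset.mem_univ i₁⟩),
    ← mul_assoc,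
    ← Finset.mul_prod_erase Finset.univ p (Finset.mem_univ i₀),
    ← Finset.mul_prod_erase _ p (Finset.mem_erase.2 ⟨hne.symm, Finset.mem_univ i₁⟩),
    ← mul_assoc]
  have hrest : ∏ i ∈ (Finset.univ.erase i₀).erase i₁, q i
      = ∏ i ∈ (Finset.univ.erase i₀).erase i₁, p i := by
    refine Finset.prod_congr rfl fun i hi => ?_
    rw [Finset.mem_erase, Finset.mem_erase] at hi
    exact hoff i hi.2.1 hi.1
  rw [hrest]
  exact mul_le_mul_left hpair _

/-- The strict-mono set in a finite product is measurable. -/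
lemma measurableSet_strictMono {n : ℕ} :
    MeasurableSet {x : Fin n → ℝ | StrictMono x} := by
  have h : {x : Fin n → ℝ | StrictMono x}
      = ⋂ (i : Fin n) (j : Fin n) (_ : i < j), {x : Fin n → ℝ | x i < x j} := by
    ext x
    simp only [Set.mem_setOf_eq, Set.mem_iInter]
    exact ⟨fun h i j hij => h hij, fun h a b hab => h a b hab⟩
  rw [h]
  exact MeasurableSet.iInter fun i => MeasurableSet.iInter fun j =>
    MeasurableSet.iInter fun _ =>
      measurableSet_lt (measurable_pi_apply i) (measurable_pi_apply j)

end SwapNeighboursAux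

open SwapNeighboursAux

/-- For jointly independent Gaussian random variables `X i ~ N(μ i, σ²)` with common
variance `σ² > 0`, if `μ k > μ (k+1)` then swapping the positions of `X k` and `X (k+1)`
in the ordering does not decrease its probability. -/
theorem swap_neighbours_prob_le
    {Ω : Type*} [MeasurableSpace Ω] (P : Measure Ω) [IsProbabilityMeasure P]
    (n : ℕ) (X : Fin n → Ω → ℝ) (hX : ∀ i, Measurable (X i))
    (μ : Fin n → ℝ) (σ : ℝ) (hσ : 0 < σ)
    (hXd : ∀ i, Measure.map (X i) P = gaussianReal (μ i) ((σ ^ 2).toNNReal))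
    (hindep : iIndepFun X P)
    (k : ℕ) (hk : k + 1 < n)
    (hμ : μ ⟨k + 1, hk⟩ < μ ⟨k, Nat.lt_of_succ_lt hk⟩) :
    P {ω | StrictMono fun i => X i ω} ≤
      P {ω | StrictMono fun i =>
        X (Equiv.swap (⟨k, Nat.lt_of_succ_lt hk⟩ : Fin n) ⟨k + 1, hk⟩ i) ω} := by
  set i₀ : Fin n := ⟨k, Nat.lt_of_succ_lt hk⟩ with hi₀
  set i₁ : Fin n := ⟨k + 1, hk⟩ with hi₁
  set sw : Equiv.Perm (Fin n) := Equiv.swap i₀ i₁ with hswdef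
  set v : ℝ≥0 := (σ ^ 2).toNNReal with hvdef
  have hv : v ≠ 0 := (Real.toNNReal_pos.mpr (by positivity)).ne'
  have hne : i₀ ≠ i₁ := by
    simp [hi₀, hi₁, Fin.ext_iff]
  have hi₀lt : i₀ < i₁ := by
    simp [hi₀, hi₁, Fin.lt_def]
  set lam : Measure (Fin n → ℝ) := Measure.pi fun _ : Fin n => (volume : Measure ℝ) with hlam
  set g : (Fin n → ℝ) → ℝ≥0∞ := fun x => ∏ i, gaussianPDF (μ i) v (x i) with hgdef
  have hg : Measurable g :=
    Finset.measurable_prod _ fun i _ =>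
      (measurable_gaussianPDF _ _).comp (measurable_pi_apply i)
  set T : (Fin n → ℝ) → (Fin n → ℝ) := fun x i => x (sw i) with hTdef
  have hTmeas : Measurable T :=
    measurable_pi_lambda _ fun i => measurable_pi_apply (sw i)
  have hTpres : MeasurePreserving T lam lam := by
    refine ⟨hTmeas, ?_⟩
    rw [hlam]
    refine (Measure.pi_eq fun s hs => ?_).symm
    rw [Measure.map_apply hTmeas (MeasurableSet.univ_pi hs)]
    have hpre : T ⁻¹' Set.pi Set.univ s = Set.pi Set.univ fun j => s (sw j) := by
      ext x
      simp only [Set.mem_preimage, Set.mem_pi, Set.mem_univ, forall_true_left, hTdef]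
      constructor
      · intro hx j
        have := hx (sw j)
        simpa [hswdef, Equiv.swap_apply_self] using this
      · intro hx i
        have := hx (sw i)
        simpa [hswdef, Equiv.swap_apply_self] using this
    rw [hpre, Measure.pi_pi]
    exact Equiv.prod_comp sw fun i => (volume : Measure ℝ) (s i)
  set A : Set (Fin n → ℝ) := {x | StrictMono x} with hAdef
  have hA : MeasurableSet A := measurableSet_strictMono
  have hB : MeasurableSet (T ⁻¹' A) := hTmeas hA
  have hjm : Measurable fun ω i => X i ω := measurable_pi_lambda _ hX
  have hjoint : Measure.map (fun ω i => X i ω) P = lam.withDensity g := by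
    rw [joint_eq_pi P X hX hindep]
    have : (fun i => Measure.map (X i) P) = fun i => gaussianReal (μ i) v := by
      funext i
      rw [hXd i, hvdef]
    rw [this, pi_gaussian_eq μ hv]
  have h1 : P {ω | StrictMono fun i => X i ω} = ∫⁻ x in A, g x ∂lam := by
    have hset : {ω | StrictMono fun i => X i ω} = (fun ω i => X i ω) ⁻¹' A := rfl
    rw [hset, ← Measure.map_apply hjm hA, hjoint, withDensity_apply _ hA]
  have h2 : P {ω | StrictMono fun i => X (sw i) ω} = ∫⁻ x in T ⁻¹' A, g x ∂lam := by
    have hset : {ω | StrictMono fun i => X (sw i) ω} = (fun ω i => X i ω) ⁻¹' (T ⁻¹' A) := rfl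
    rw [hset, ← Measure.map_apply hjm hB, hjoint, withDensity_apply _ hB]
  rw [h1, h2]
  have key : ∀ x ∈ T ⁻¹' A, g (T x) ≤ g x := by
    intro x hx
    have hxlt : x i₁ < x i₀ := by
      have := (hx : StrictMono fun i => x (sw i)) hi₀lt
      simpa [hTdef, hswdef, Equiv.swap_apply_left, Equiv.swap_apply_right] using this
    have hgT : g (T x) = ∏ i, gaussianPDF (μ (sw i)) v (x i) := by
      rw [hgdef]
      calc ∏ i, gaussianPDF (μ i) v (x (sw i))
          = ∏ i, (fun j => gaussianPDF (μ (sw j)) v (x j)) (sw i) := by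
            refine Finset.prod_congr rfl fun i _ => ?_
            simp [hswdef, Equiv.swap_apply_self]
        _ = ∏ i, gaussianPDF (μ (sw i)) v (x i) :=
            Equiv.prod_comp sw (fun j => gaussianPDF (μ (sw j)) v (x j))
    rw [hgT, hgdef]
    refine prod_le_of_pair _ _ i₀ i₁ hne (fun i h0 h1 => ?_) ?_
    · simp only [hswdef, Equiv.swap_apply_of_ne_of_ne h0 h1]
    · have := gaussianPDF_mul_le (a := μ i₀) (b := μ i₁) (y := x i₁) (z := x i₀)
        hv hμ.le hxlt.le
      calc gaussianPDF (μ (sw i₀)) v (x i₀) * gaussianPDF (μ (sw i₁)) v (x i₁)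
          = gaussianPDF (μ i₀) v (x i₁) * gaussianPDF (μ i₁) v (x i₀) := by
            simp only [hswdef, Equiv.swap_apply_left, Equiv.swap_apply_right]
            rw [mul_comm]
        _ ≤ gaussianPDF (μ i₀) v (x i₀) * gaussianPDF (μ i₁) v (x i₁) := this
  calc ∫⁻ x in A, g x ∂lam
      = ∫⁻ x in A, g x ∂(Measure.map T lam) := by rw [hTpres.map_eq]
    _ = ∫⁻ x in T ⁻¹' A, g (T x) ∂lam := setLIntegral_map hA hg hTmeas
    _ ≤ ∫⁻ x in T ⁻¹' A, g x ∂lam := setLIntegral_mono hg key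
end
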